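/- arXiv:2211.15567 — 9 statements merged into one kernel-verified Lean document; each statement's English description precedes it below -/
import Mathlib

section
/- For every real β > 1 and every integer k ≥ 0, W_β'(β^k) = -β^{-k} · W_β(β^{-1}) · ∏_{l=1}^{k} (1 - β^l). -/
/-- `Wprod β z = ∏_{j=0}^∞ (1 - z·β^{-j})`, the entire function from the context. -/
noncomputable def Wprod (β : ℝ) (z : ℂ) : ℂ := ∏' j : ℕ, (1 - z / (β : ℂ) ^ j)

/-!
By the Weierstrass M-test (with majorant `R ‖b‖⁻ʲ` on `‖z‖ ≤ R`) the product
`∏ⱼ (1 - z / bʲ)` converges locally uniformly, so it is entire whenever `1 < ‖b‖`.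
Splitting off its first `k + 1` factors gives
`W(z) = (1 - z / bᵏ) · ∏_{j<k} (1 - z / bʲ) · W(z / b^{k+1})`. The first factor vanishes at
`z = bᵏ`, so the product rule leaves only `-b⁻ᵏ` times the other two factors at `bᵏ`,
namely `∏_{l=1}^{k} (1 - bˡ)` and `W(b⁻¹)`.
-/

open Finset

lemma norm_div_pow_le {b z : ℂ} {R : ℝ} (hz : ‖z‖ ≤ R) (j : ℕ) :
    ‖z / b ^ j‖ ≤ R * ‖b‖⁻¹ ^ j := by
  rw [norm_div, norm_pow, div_eq_mul_inv, inv_pow]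
  gcongr

section

variable {b : ℂ}

lemma hasProdLocallyUniformlyOn_one_sub_div_pow (hb : 1 < ‖b‖) :
    HasProdLocallyUniformlyOn (fun j z => 1 - z / b ^ j) (fun z => ∏' j : ℕ, (1 - z / b ^ j))
      Set.univ := by
  simp_rw [sub_eq_add_neg]
  refine hasProdLocallyUniformlyOn_of_forall_compact isOpen_univ fun K _ hK => ?_
  obtain ⟨R, hR⟩ := hK.isBounded.exists_norm_le
  have hsum : Summable fun j : ℕ => R * ‖b‖⁻¹ ^ j :=
    (summable_geometric_of_lt_one (by positivity) (inv_lt_one_of_one_lt₀ hb)).mul_left R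
  refine hsum.hasProdUniformlyOn_nat_one_add hK (.of_forall fun j z hz => ?_) fun j => by fun_prop
  simpa using norm_div_pow_le (hR z hz) j

lemma multipliable_one_sub_div_pow (hb : 1 < ‖b‖) (z : ℂ) :
    Multipliable fun j : ℕ => 1 - z / b ^ j :=
  ((hasProdLocallyUniformlyOn_one_sub_div_pow hb).hasProd (Set.mem_univ z)).multipliable

lemma differentiable_tprod_one_sub_div_pow (hb : 1 < ‖b‖) :
    Differentiable ℂ fun z => ∏' j : ℕ, (1 - z / b ^ j) := by
  rw [← differentiableOn_univ]
  exact (hasProdLocallyUniformlyOn_one_sub_div_pow hb).differentiableOn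
    (.of_forall fun s => by fun_prop) isOpen_univ

lemma tprod_one_sub_div_pow_eq_prod_mul (hb : 1 < ‖b‖) (n : ℕ) (z : ℂ) :
    ∏' j : ℕ, (1 - z / b ^ j) =
      (∏ j ∈ range n, (1 - z / b ^ j)) * ∏' j : ℕ, (1 - z / b ^ n / b ^ j) := by
  have hshift (j : ℕ) : 1 - z / b ^ n / b ^ j = 1 - z / b ^ (j + n) := by
    rw [div_div, ← pow_add, add_comm]
  simp_rw [hshift]
  exact (Multipliable.prod_mul_tprod_nat_mul' (f := fun j => 1 - z / b ^ j)
    ((multipliable_one_sub_div_pow hb (z / b ^ n)).congr hshift)).symm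

end

lemma prod_range_one_sub_pow_div_pow {K : Type*} [Field K] {b : K} (hb : b ≠ 0) (k : ℕ) :
    ∏ j ∈ range k, (1 - b ^ k / b ^ j) = ∏ l ∈ Icc 1 k, (1 - b ^ l) := by
  refine prod_nbij' (fun j => k - j) (fun l => k - l) ?_ ?_ ?_ ?_ ?_ <;>
    simp only [mem_range, mem_Icc]
  any_goals omega
  intro j hj
  rw [pow_sub₀ b hb hj.le, div_eq_mul_inv]

/-- for every real β > 1 and every k ∈ ℕ,
W_β'(β^k) = -β^{-k} · W_β(β^{-1}) · ∏_{l=1}^{k} (1 - β^l). -/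
theorem statement2 (β : ℝ) (hβ : 1 < β) (k : ℕ) :
    deriv (Wprod β) ((β : ℂ) ^ k) =
      -((β : ℂ) ^ k)⁻¹ * Wprod β ((β : ℂ)⁻¹) * ∏ l ∈ Finset.Icc 1 k, (1 - (β : ℂ) ^ l) := by
  set b : ℂ := (β : ℂ)
  have hb : 1 < ‖b‖ := by simpa [b, abs_of_pos (zero_lt_one.trans hβ)] using hβ
  have hb0 : b ≠ 0 := norm_pos_iff.mp (zero_lt_one.trans hb)
  have hW : Differentiable ℂ (Wprod β) := differentiable_tprod_one_sub_div_pow hb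
  have hfactor (z : ℂ) : Wprod β z =
      (1 - z / b ^ k) * ((∏ j ∈ range k, (1 - z / b ^ j)) * Wprod β (z / b ^ (k + 1))) := by
    rw [Wprod, Wprod, tprod_one_sub_div_pow_eq_prod_mul hb (k + 1), prod_range_succ]
    ring
  have hu : HasDerivAt (fun z => 1 - z / b ^ k) (-(b ^ k)⁻¹) (b ^ k) := by
    simpa [div_eq_mul_inv] using ((hasDerivAt_id _).mul_const (b ^ k)⁻¹).const_sub 1
  have hG : DifferentiableAt ℂ
      (fun z => (∏ j ∈ range k, (1 - z / b ^ j)) * Wprod β (z / b ^ (k + 1))) (b ^ k) := by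
    fun_prop
  rw [((hu.mul hG.hasDerivAt).congr_of_eventuallyEq (.of_forall hfactor)).deriv,
    div_self (pow_ne_zero k hb0), pow_succ, div_mul_cancel_left₀ (pow_ne_zero k hb0),
    prod_range_one_sub_pow_div_pow hb0]
  ring
end

section
/- For every real β > 2 and every integer l ≥ 1, ∑_{k=1}^∞ |W_β(β^{-l}) / (W_β'(β^k) · (β^{-l} - β^k))| ≤ β^3 · exp(2/(β-1)) / ((β^2 - 1)(β^2 - β - 1)). -/
/-!
Each term is bounded by a geometric series with ratio `(β² - β)⁻¹`. For `0 ≤ x ≤ 1` every factor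
of `W_β(x)` lies in `[0, 1]`, so `|W_β(β⁻ˡ)| ≤ 1`, and `|β⁻ˡ - βᵐ| ≥ βᵐ (1 - β⁻²)` for `m ≥ 1`.
Since the product converges locally uniformly, `W_β'(βᵐ)` is the limit of the derivatives of the
partial products, namely `-β⁻ᵐ ∏_{j ≠ m} (1 - β^(m-j))`. The factors with `j < m` multiply to
`∏_{i=1}^m (βⁱ - 1) ≥ (β - 1)(β² - β)^(m-1)`, and those with `j > m` to at least `exp(-2/(β-1))`,
because `1 - t ≥ exp(-2t)` for `0 ≤ t ≤ 1/2`.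
-/

open Filter Topology Finset

lemma Real.exp_neg_two_mul_le_one_sub {t : ℝ} (h0 : 0 ≤ t) (h2 : t ≤ 1 / 2) :
    Real.exp (-(2 * t)) ≤ 1 - t := by
  have hpos : 0 < 1 - t := by linarith
  rw [Real.exp_neg, inv_le_comm₀ (Real.exp_pos _) hpos]
  calc (1 - t)⁻¹ ≤ 1 + 2 * t := by rw [inv_le_iff_one_le_mul₀ hpos]; nlinarith
    _ ≤ Real.exp (2 * t) := by linarith [Real.add_one_le_exp (2 * t)]

lemma Real.exp_neg_two_mul_sum_le_prod_one_sub {ι : Type*} (s : Finset ι) {v : ι → ℝ}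
    (h0 : ∀ i ∈ s, 0 ≤ v i) (h2 : ∀ i ∈ s, v i ≤ 1 / 2) :
    Real.exp (-(2 * ∑ i ∈ s, v i)) ≤ ∏ i ∈ s, (1 - v i) := by
  rw [mul_sum, ← sum_neg_distrib, Real.exp_sum]
  exact prod_le_prod (fun i _ => (Real.exp_pos _).le)
    fun i hi => Real.exp_neg_two_mul_le_one_sub (h0 i hi) (h2 i hi)

section Wprod

variable {β : ℝ}

lemma hasProdLocallyUniformlyOn_Wprod (hβ : 1 < β) (R : ℝ) :
    HasProdLocallyUniformlyOn (fun j z => 1 - z / (β : ℂ) ^ j) (Wprod β) (Metric.ball 0 R) := by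
  have hr0 : 0 ≤ β⁻¹ := inv_nonneg.2 (by linarith)
  have hr1 : β⁻¹ < 1 := inv_lt_one_of_one_lt₀ hβ
  have H := Summable.hasProdLocallyUniformlyOn_nat_one_add
    (f := fun j (z : ℂ) => -(z / (β : ℂ) ^ j)) (Metric.isOpen_ball (x := 0) (ε := R))
    ((summable_geometric_of_lt_one hr0 hr1).mul_left R) ?_ (fun j => by fun_prop)
  · simp only [← sub_eq_add_neg] at H
    exact H
  · refine Eventually.of_forall fun j z hz => ?_
    rw [norm_neg, norm_div, norm_pow, Complex.norm_real, Real.norm_of_nonneg (by linarith),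
      inv_pow, div_eq_mul_inv]
    exact mul_le_mul_of_nonneg_right (mem_ball_zero_iff.1 hz).le (by positivity)

lemma hasProd_Wprod (hβ : 1 < β) (z : ℂ) :
    HasProd (fun j => 1 - z / (β : ℂ) ^ j) (Wprod β z) :=
  (hasProdLocallyUniformlyOn_Wprod hβ (‖z‖ + 1)).hasProd (by simp)

lemma tendsto_deriv_prod_range_Wprod (hβ : 1 < β) (z : ℂ) :
    Tendsto (fun n => deriv (fun w => ∏ j ∈ range n, (1 - w / (β : ℂ) ^ j)) z) atTop
      (𝓝 (deriv (Wprod β) z)) := by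
  have H := (hasProdLocallyUniformlyOn_Wprod hβ (‖z‖ + 1)).tendstoLocallyUniformlyOn_finsetRange
  exact (H.deriv (Eventually.of_forall fun n => by fun_prop) Metric.isOpen_ball).tendsto_at
    (by simp)

lemma norm_Wprod_le_one (hβ : 1 < β) {x : ℝ} (hx0 : 0 ≤ x) (hx1 : x ≤ 1) :
    ‖Wprod β x‖ ≤ 1 := by
  refine le_of_tendsto' (hasProd_Wprod hβ x).norm fun s =>
    prod_le_one (fun _ _ => norm_nonneg _) fun j _ => ?_
  have hj : x / β ^ j ≤ 1 := div_le_one_of_le₀ (hx1.trans (one_le_pow₀ hβ.le)) (by positivity)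
  rw [← Complex.ofReal_pow, ← Complex.ofReal_div, ← Complex.ofReal_one, ← Complex.ofReal_sub,
    Complex.norm_real, Real.norm_of_nonneg (by linarith)]
  linarith [div_nonneg hx0 (pow_nonneg (hx0.trans (hx1.trans hβ.le)) j)]

lemma hasDerivAt_one_sub_div_mul {c : ℂ} (hc : c ≠ 0) {g : ℂ → ℂ}
    (hg : DifferentiableAt ℂ g c) : HasDerivAt (fun w => (1 - w / c) * g w) (-c⁻¹ * g c) c :=
  ((((hasDerivAt_id c).div_const c).const_sub 1).fun_mul hg.hasDerivAt).congr_deriv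
    (by simp [div_self hc])

lemma deriv_prod_range_one_sub_div_pow (hβ : β ≠ 0) {m n : ℕ} (hmn : m < n) :
    deriv (fun w => ∏ j ∈ range n, (1 - w / (β : ℂ) ^ j)) ((β : ℂ) ^ m) =
      -((β : ℂ) ^ m)⁻¹ * ∏ j ∈ (range n).erase m, (1 - (β : ℂ) ^ m / (β : ℂ) ^ j) := by
  simp_rw [← mul_prod_erase (range n) _ (mem_range.2 hmn)]
  exact (hasDerivAt_one_sub_div_mul (pow_ne_zero m (Complex.ofReal_ne_zero.2 hβ))
    (by fun_prop)).deriv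

lemma mul_pow_le_prod_range_pow_succ_sub_one (hβ : 1 ≤ β) (k : ℕ) :
    (β - 1) * (β ^ 2 - β) ^ k ≤ ∏ i ∈ range (k + 1), (β ^ (i + 1) - 1) := by
  induction k with
  | zero => simp
  | succ k ih =>
    rw [prod_range_succ, pow_succ, ← mul_assoc]
    have hβ2 : β ^ 2 ≤ β ^ (k + 2) := pow_le_pow_right₀ hβ (by omega)
    have hq : 0 ≤ β ^ 2 - β := by nlinarith
    exact mul_le_mul ih (by linarith) hq ((mul_nonneg (by linarith) (pow_nonneg hq k)).trans ih)

lemma abs_prod_range_one_sub_pow_div (hβ : 1 ≤ β) (m : ℕ) :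
    |∏ j ∈ range m, (1 - β ^ m / β ^ j)| = ∏ i ∈ range m, (β ^ (i + 1) - 1) := by
  rw [abs_prod, ← prod_range_reflect (fun i => β ^ (i + 1) - 1)]
  refine prod_congr rfl fun j hj => ?_
  have hj := mem_range.1 hj
  rw [div_eq_mul_inv, ← pow_sub₀ _ (by positivity) hj.le, abs_sub_comm,
    abs_of_nonneg (by linarith [one_le_pow₀ (n := m - j) hβ])]
  congr 2
  omega

lemma exp_le_prod_Ico_one_sub_pow_div (hβ : 2 ≤ β) (m n : ℕ) :
    Real.exp (-(2 / (β - 1))) ≤ ∏ j ∈ Ico (m + 1) n, (1 - β ^ m / β ^ j) := by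
  have hβ0 : 0 < β := by linarith
  have hr1 : β⁻¹ < 1 := inv_lt_one_of_one_lt₀ (by linarith)
  have hterm : ∀ j ∈ Ico (m + 1) n, β ^ m / β ^ j = β ^ m * β⁻¹ ^ j := fun j _ => by
    rw [inv_pow, div_eq_mul_inv]
  have hsum : ∑ j ∈ Ico (m + 1) n, β ^ m / β ^ j ≤ 1 / (β - 1) := by
    rw [sum_congr rfl hterm, ← mul_sum]
    calc β ^ m * ∑ j ∈ Ico (m + 1) n, β⁻¹ ^ j ≤ β ^ m * (β⁻¹ ^ (m + 1) / (1 - β⁻¹)) :=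
          mul_le_mul_of_nonneg_left (geom_sum_Ico_le_of_lt_one (by positivity) hr1)
            (by positivity)
      _ = 1 / (β - 1) := by
          have hβ1 : β - 1 ≠ 0 := by linarith
          rw [inv_pow, pow_succ]
          field_simp
  refine (Real.exp_le_exp.2 ?_).trans (Real.exp_neg_two_mul_sum_le_prod_one_sub _
    (fun j _ => by positivity) fun j hj => ?_)
  · linarith [show 2 / (β - 1) = 2 * (1 / (β - 1)) by ring]
  · have hj := (mem_Ico.1 hj).1
    calc β ^ m / β ^ j ≤ β ^ m / β ^ (m + 1) :=
          div_le_div_of_nonneg_left (by positivity) (by positivity)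
            (pow_le_pow_right₀ (by linarith) hj)
      _ = β⁻¹ := by rw [pow_succ, div_mul_cancel_left₀ (by positivity)]
      _ ≤ 1 / 2 := by rw [inv_le_comm₀ hβ0 (by norm_num)]; linarith

lemma abs_prod_erase_one_sub_pow_div_ge (hβ : 2 ≤ β) (k : ℕ) {n : ℕ} (hn : k + 1 < n) :
    (β - 1) * (β ^ 2 - β) ^ k * Real.exp (-(2 / (β - 1))) ≤
      |∏ j ∈ (range n).erase (k + 1), (1 - β ^ (k + 1) / β ^ j)| := by
  have hsplit : (range n).erase (k + 1) = range (k + 1) ∪ Ico (k + 2) n := by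
    ext j
    simp only [mem_erase, mem_range, mem_union, mem_Ico]
    omega
  have hdisj : Disjoint (range (k + 1)) (Ico (k + 2) n) :=
    disjoint_left.2 fun j hj hj' => by simp only [mem_range, mem_Ico] at hj hj'; omega
  rw [hsplit, prod_union hdisj, abs_mul, abs_prod_range_one_sub_pow_div (by linarith),
    abs_of_pos ((Real.exp_pos _).trans_le (exp_le_prod_Ico_one_sub_pow_div hβ _ _))]
  exact mul_le_mul (mul_pow_le_prod_range_pow_succ_sub_one (by linarith) k)
    (exp_le_prod_Ico_one_sub_pow_div hβ _ _) (Real.exp_pos _).le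
    ((mul_nonneg (by linarith) (pow_nonneg (by nlinarith) k)).trans
      (mul_pow_le_prod_range_pow_succ_sub_one (by linarith) k))

lemma norm_deriv_Wprod_pow_ge (hβ : 2 ≤ β) (k : ℕ) :
    (β - 1) * (β ^ 2 - β) ^ k * Real.exp (-(2 / (β - 1))) / β ^ (k + 1) ≤
      ‖deriv (Wprod β) ((β : ℂ) ^ (k + 1))‖ := by
  refine ge_of_tendsto (tendsto_deriv_prod_range_Wprod (by linarith) _).norm ?_
  filter_upwards [eventually_gt_atTop (k + 1)] with n hn
  have hcast : ∏ j ∈ (range n).erase (k + 1), (1 - (β : ℂ) ^ (k + 1) / (β : ℂ) ^ j) =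
      ((∏ j ∈ (range n).erase (k + 1), (1 - β ^ (k + 1) / β ^ j) : ℝ) : ℂ) := by
    push_cast; rfl
  rw [deriv_prod_range_one_sub_div_pow (by linarith) hn, hcast, norm_mul, norm_neg, norm_inv,
    norm_pow, Complex.norm_real, Complex.norm_real,
    Real.norm_of_nonneg (show 0 ≤ β by linarith), Real.norm_eq_abs, div_eq_inv_mul]
  exact mul_le_mul_of_nonneg_left (abs_prod_erase_one_sub_pow_div_ge hβ k hn) (by positivity)

lemma pow_mul_one_sub_inv_sq_le_norm_sub (hβ : 1 ≤ β) {x : ℝ} (hx : x ≤ β⁻¹) (k : ℕ) :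
    β ^ (k + 1) * (1 - (β ^ 2)⁻¹) ≤ ‖(x : ℂ) - (β : ℂ) ^ (k + 1)‖ := by
  have hxk : x ≤ β ^ (k + 1) * (β ^ 2)⁻¹ := by
    calc x ≤ β * (β ^ 2)⁻¹ := by rwa [sq, mul_inv, mul_inv_cancel_left₀ (by positivity)]
      _ ≤ β ^ (k + 1) * (β ^ 2)⁻¹ :=
        mul_le_mul_of_nonneg_right (le_self_pow₀ hβ (by omega)) (by positivity)
  rw [← Complex.ofReal_pow, ← Complex.ofReal_sub, Complex.norm_real, Real.norm_eq_abs,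
    abs_sub_comm]
  exact (le_abs_self _).trans' (by linarith)

lemma norm_div_deriv_Wprod_mul_sub_le (hβ : 2 ≤ β) {x : ℝ} (hx0 : 0 ≤ x) (hx : x ≤ β⁻¹)
    (k : ℕ) :
    ‖Wprod β x / (deriv (Wprod β) ((β : ℂ) ^ (k + 1)) * ((x : ℂ) - (β : ℂ) ^ (k + 1)))‖ ≤
      Real.exp (2 / (β - 1)) / ((β - 1) * (1 - (β ^ 2)⁻¹)) * ((β ^ 2 - β)⁻¹) ^ k := by
  have hβ0 : 0 < β := by linarith
  have hx1 : x ≤ 1 := hx.trans (inv_le_one_of_one_le₀ (by linarith))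
  have hD := norm_deriv_Wprod_pow_ge hβ k
  have hX := pow_mul_one_sub_inv_sq_le_norm_sub (by linarith) hx k
  have hD0 : 0 < (β - 1) * (β ^ 2 - β) ^ k * Real.exp (-(2 / (β - 1))) / β ^ (k + 1) := by
    have : 0 < β ^ 2 - β := by nlinarith
    have : 0 < β - 1 := by linarith
    positivity
  have hX0 : 0 < β ^ (k + 1) * (1 - (β ^ 2)⁻¹) := by
    have : (β ^ 2)⁻¹ < 1 := inv_lt_one_of_one_lt₀ (by nlinarith)
    have : 0 < 1 - (β ^ 2)⁻¹ := by linarith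
    positivity
  rw [norm_div, norm_mul]
  calc ‖Wprod β x‖ / (‖deriv (Wprod β) ((β : ℂ) ^ (k + 1))‖ * ‖(x : ℂ) - (β : ℂ) ^ (k + 1)‖)
      ≤ 1 / ((β - 1) * (β ^ 2 - β) ^ k * Real.exp (-(2 / (β - 1))) / β ^ (k + 1) *
          (β ^ (k + 1) * (1 - (β ^ 2)⁻¹))) :=
        div_le_div₀ zero_le_one (norm_Wprod_le_one (by linarith) hx0 hx1) (by positivity)
          (mul_le_mul hD hX hX0.le (hD0.le.trans hD))
    _ = _ := by
        have : β - 1 ≠ 0 := by linarith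
        have : β ^ 2 - 1 ≠ 0 := by nlinarith
        rw [Real.exp_neg, inv_pow]
        field_simp

end Wprod

/-- for every real β > 2 and every integer l ≥ 1,
∑_{k=1}^∞ |W_β(β^{-l}) / (W_β'(β^k) · (β^{-l} - β^k))|
  ≤ β³ · exp(2/(β-1)) / ((β² - 1)(β² - β - 1)). -/
theorem statement6 (β : ℝ) (hβ : 2 < β) (l : ℕ) (hl : 1 ≤ l) :
    Summable (fun k : ℕ =>
      ‖(Wprod β ((((β ^ l)⁻¹ : ℝ)) : ℂ) /
        (deriv (Wprod β) ((β : ℂ) ^ (k + 1)) *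
          ((((β ^ l)⁻¹ : ℝ) : ℂ) - (β : ℂ) ^ (k + 1))))‖) ∧
    (∑' k : ℕ,
      ‖(Wprod β ((((β ^ l)⁻¹ : ℝ)) : ℂ) /
        (deriv (Wprod β) ((β : ℂ) ^ (k + 1)) *
          ((((β ^ l)⁻¹ : ℝ) : ℂ) - (β : ℂ) ^ (k + 1))))‖)
      ≤ β ^ 3 * Real.exp (2 / (β - 1)) / ((β ^ 2 - 1) * (β ^ 2 - β - 1)) := by
  have hβ0 : 0 < β := by linarith
  have hx : (β ^ l)⁻¹ ≤ β⁻¹ := inv_anti₀ hβ0 (le_self_pow₀ (by linarith) (by omega))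
  have hterm := norm_div_deriv_Wprod_mul_sub_le hβ.le (by positivity) hx
  have hr0 : 0 ≤ (β ^ 2 - β)⁻¹ := inv_nonneg.2 (by nlinarith)
  have hr1 : (β ^ 2 - β)⁻¹ < 1 := inv_lt_one_of_one_lt₀ (by nlinarith)
  have hgeom := (summable_geometric_of_lt_one hr0 hr1).mul_left
    (Real.exp (2 / (β - 1)) / ((β - 1) * (1 - (β ^ 2)⁻¹)))
  have hsum := Summable.of_nonneg_of_le (fun _ => norm_nonneg _) hterm hgeom
  refine ⟨hsum, (hsum.tsum_le_tsum hterm hgeom).trans (le_of_eq ?_)⟩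
  have : β - 1 ≠ 0 := by linarith
  have : β ^ 2 - 1 ≠ 0 := by nlinarith
  have : β ^ 2 - β ≠ 0 := by nlinarith
  have : β ^ 2 - β - 1 ≠ 0 := by nlinarith
  rw [tsum_mul_left, tsum_geometric_of_lt_one hr0 hr1]
  field_simp
end

section
/- Let u = (u_k)_{k=0}^∞ and v = (v_k)_{k=0}^∞ be bounded complex sequences with u_0 = v_0. Then sup_{l ≥ 1} |F_u^4(4^{-l}) - F_v^4(4^{-l})| ≤ (64·e^{2/3}/165) · sup_{k ≥ 0} |u_k - v_k|; moreover 64·e^{2/3}/165 < 1. -/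
/-- `Ffun β u z = ∑_{k=0}^∞ (u_k / W_β'(β^k)) · W_β(z)/(z - β^k)`; for a bounded
sequence `u` this agrees with the entire function `F_u^β` away from the points `β^m`
(in particular at the points `4^{-l}` used below). -/
noncomputable def Ffun (β : ℝ) (u : ℕ → ℂ) (z : ℂ) : ℂ :=
  ∑' k : ℕ, u k / deriv (Wprod β) ((β : ℂ) ^ k) * (Wprod β z / (z - (β : ℂ) ^ k))


/-!
Write `Ffun 4 u z = ∑ u k * L k z` with `L k z = W(z) / (W'(4^k) (z - 4^k))`. Since `u 0 = v 0`
the `k = 0` term drops out of the difference. Splitting off the zero at `4^k` gives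
`W'(4^k) = -4^{-k} ∏_{j<k} (1 - 4^{k-j}) W(1/4)`, and `|W(1/4)| ≥ e^{-2/3}` because
`log (1 - t) ≥ -2t` on `[0, 1/2]`. Together with `|W(4^{-l})| ≤ 1` and `|4^{-l} - 4^k| ≥ (15/16) 4^k`
this gives `|L k (4^{-l})| ≤ (16/45) e^{2/3} 15^{1-k}` for `k ≥ 1`, and these bounds sum to
`(8/21) e^{2/3} < 64 e^{2/3} / 165`. Finally `e^{2/3} < (3/2)^2 < 165/64`.
-/

open Finset

lemma Real.exp_neg_two_mul_tsum_le_tprod_one_sub {ι : Type*} {f : ι → ℝ} (h0 : ∀ i, 0 ≤ f i)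
    (h1 : ∀ i, f i ≤ 1 / 2) (hf : Summable f) :
    Real.exp (-(2 * ∑' i, f i)) ≤ ∏' i, (1 - f i) := by
  have hpos : ∀ i, 0 < 1 - f i := fun i => by linarith [h1 i]
  have hlog : Summable fun i => Real.log (1 - f i) := by
    simpa only [← sub_eq_add_neg] using Real.summable_log_one_add_of_summable hf.neg
  -- `log y ≥ 1 - 1/y`, and `1 - 1/(1 - t) = -t/(1 - t) ≥ -2t` for `0 ≤ t ≤ 1/2`
  have hle : ∀ i, -(2 * f i) ≤ Real.log (1 - f i) := fun i => by
    refine le_trans ?_ (Real.one_sub_inv_le_log_of_pos (hpos i))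
    rw [le_sub_iff_add_le, ← le_sub_iff_add_le', inv_le_comm₀ (hpos i) (by linarith [h1 i, h0 i]),
      inv_le_iff_one_le_mul₀' (by linarith [h1 i, h0 i])]
    nlinarith [h0 i, h1 i]
  rw [← Real.rexp_tsum_eq_tprod hpos hlog, ← tsum_mul_left, ← tsum_neg]
  exact Real.exp_le_exp.mpr ((hf.mul_left 2).neg.tsum_le_tsum hle hlog)

lemma norm_tprod_le_one {ι E : Type*} [SeminormedCommRing E] [NormMulClass E] [NormOneClass E]
    {f : ι → E} (hf : Multipliable f) (h : ∀ i, ‖f i‖ ≤ 1) :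
    ‖∏' i, f i‖ ≤ 1 :=
  le_of_tendsto' hf.hasProd.norm fun _ => prod_le_one (fun _ _ => norm_nonneg _) fun i _ => h i

namespace Wprod

variable {β : ℝ}

lemma summable_mul_inv_pow (hβ : 1 < β) (R : ℝ) :
    Summable fun j : ℕ => R * (β⁻¹) ^ j :=
  (summable_geometric_of_lt_one (by positivity) (inv_lt_one_of_one_lt₀ hβ)).mul_left R

lemma norm_div_pow (hβ : 0 ≤ β) (z : ℂ) (j : ℕ) : ‖z / (β : ℂ) ^ j‖ = ‖z‖ * (β⁻¹) ^ j := by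
  rw [norm_div, norm_pow, Complex.norm_real, Real.norm_of_nonneg hβ, div_eq_mul_inv, inv_pow]

lemma multipliable (hβ : 1 < β) (z : ℂ) : Multipliable fun j : ℕ => 1 - z / (β : ℂ) ^ j := by
  simp_rw [sub_eq_add_neg]
  refine Complex.multipliable_one_add_of_summable (Summable.of_norm ?_)
  simpa only [norm_neg, norm_div_pow (zero_le_one.trans hβ.le)] using summable_mul_inv_pow hβ ‖z‖

lemma hasProdLocallyUniformlyOn_ball (hβ : 1 < β) (R : ℝ) :
    HasProdLocallyUniformlyOn (fun j w => 1 - w / (β : ℂ) ^ j) (Wprod β) (Metric.ball 0 R) := by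
  simp_rw [sub_eq_add_neg]
  refine Summable.hasProdLocallyUniformlyOn_one_add Metric.isOpen_ball
    (summable_mul_inv_pow hβ R) (.of_forall fun j w hw => ?_) (fun j => by fun_prop)
  rw [norm_neg, norm_div_pow (zero_le_one.trans hβ.le)]
  gcongr
  exact (mem_ball_zero_iff.mp hw).le

lemma differentiable (hβ : 1 < β) : Differentiable ℂ (Wprod β) := by
  intro z
  have hz : z ∈ Metric.ball (0 : ℂ) (‖z‖ + 1) := by simp
  refine ((hasProdLocallyUniformlyOn_ball hβ _).differentiableOn (.of_forall fun s => ?_)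
    Metric.isOpen_ball z hz).differentiableAt (Metric.isOpen_ball.mem_nhds hz)
  simpa [Finset.prod_fn] using DifferentiableOn.finsetProd (fun _ _ => by fun_prop)

lemma eq_prod_range_mul (hβ : 1 < β) (K : ℕ) (z : ℂ) :
    Wprod β z = (∏ j ∈ range K, (1 - z / (β : ℂ) ^ j)) * Wprod β (z / (β : ℂ) ^ K) := by
  have hshift : (fun i => 1 - z / (β : ℂ) ^ (i + K)) = fun i => 1 - z / (β : ℂ) ^ K / (β : ℂ) ^ i :=
    funext fun i => by rw [pow_add, div_div, mul_comm]
  have h := multipliable hβ (z / (β : ℂ) ^ K)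
  rw [← hshift] at h
  calc Wprod β z = (∏ j ∈ range K, (1 - z / (β : ℂ) ^ j)) * ∏' j, (1 - z / (β : ℂ) ^ (j + K)) :=
        (h.prod_mul_tprod_nat_mul' (f := fun j => 1 - z / (β : ℂ) ^ j)).symm
    _ = _ := by rw [hshift]; rfl

lemma hasDerivAt_pow (hβ : 1 < β) (k : ℕ) :
    HasDerivAt (Wprod β)
      (-((∏ j ∈ range k, (1 - (β : ℂ) ^ k / (β : ℂ) ^ j)) * Wprod β (β : ℂ)⁻¹) / (β : ℂ) ^ k)
      ((β : ℂ) ^ k) := by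
  set a : ℂ := (β : ℂ) ^ k
  have ha : a ≠ 0 := pow_ne_zero _ (by exact_mod_cast (zero_lt_one.trans hβ).ne')
  set g : ℂ → ℂ := fun z => (∏ j ∈ range k, (1 - z / (β : ℂ) ^ j)) * Wprod β (z / (β : ℂ) ^ (k + 1))
  have hW : Wprod β = fun z => (1 - z / a) * g z := by
    ext z
    rw [eq_prod_range_mul hβ (k + 1), prod_range_succ]
    ring
  have hg : DifferentiableAt ℂ g a := by
    have := (differentiable hβ).differentiableAt (x := a / (β : ℂ) ^ (k + 1))
    fun_prop
  have hga : g a = (∏ j ∈ range k, (1 - a / (β : ℂ) ^ j)) * Wprod β (β : ℂ)⁻¹ := by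
    change _ * Wprod β (a / _) = _
    rw [pow_succ, ← div_div, div_self ha, one_div]
  have key : HasDerivAt (fun z => (1 - z / a) * g z) (-g a / a) a := by
    refine ((((hasDerivAt_id a).div_const a).const_sub 1).mul hg.hasDerivAt).congr_deriv ?_
    rw [id, div_self ha]
    ring
  rwa [hga, ← hW] at key

lemma norm_one_sub_div_pow (hβ : 1 < β) {x : ℝ} (hx1 : x ≤ 1) (j : ℕ) :
    ‖1 - (x : ℂ) / (β : ℂ) ^ j‖ = 1 - x * β⁻¹ ^ j := by
  have hxj : x * β⁻¹ ^ j ≤ 1 :=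
    mul_le_one₀ hx1 (by positivity) (pow_le_one₀ (by positivity) (inv_le_one_of_one_le₀ hβ.le))
  rw [← Complex.ofReal_pow, ← Complex.ofReal_div, ← Complex.ofReal_one, ← Complex.ofReal_sub,
    Complex.norm_real, Real.norm_of_nonneg (by rw [div_eq_mul_inv, ← inv_pow]; linarith),
    div_eq_mul_inv, inv_pow]

lemma norm_le_one (hβ : 1 < β) {x : ℝ} (hx0 : 0 ≤ x) (hx1 : x ≤ 1) : ‖Wprod β x‖ ≤ 1 :=
  norm_tprod_le_one (multipliable hβ x) fun j => by
    rw [norm_one_sub_div_pow hβ hx1]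
    linarith [show 0 ≤ x * β⁻¹ ^ j by positivity]

lemma exp_le_norm (hβ : 1 < β) {x : ℝ} (hx0 : 0 ≤ x) (hx : x ≤ 1 / 2) :
    Real.exp (-(2 * (x * (1 - β⁻¹)⁻¹))) ≤ ‖Wprod β x‖ := by
  have hr : β⁻¹ < 1 := inv_lt_one_of_one_lt₀ hβ
  rw [Wprod, (multipliable hβ x).norm_tprod]
  simp_rw [norm_one_sub_div_pow hβ (show x ≤ 1 by linarith)]
  rw [← tsum_geometric_of_lt_one (by positivity) hr, ← tsum_mul_left]
  exact Real.exp_neg_two_mul_tsum_le_tprod_one_sub (fun j => by positivity)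
    (fun j => by nlinarith [pow_le_one₀ (n := j) (inv_nonneg.mpr (zero_le_one.trans hβ.le)) hr.le])
    (summable_mul_inv_pow hβ x)

end Wprod

noncomputable def lagrangeCoeff (β : ℝ) (z : ℂ) (k : ℕ) : ℂ :=
  (deriv (Wprod β) ((β : ℂ) ^ k))⁻¹ * (Wprod β z / (z - (β : ℂ) ^ k))

lemma Ffun_eq_tsum (β : ℝ) (u : ℕ → ℂ) (z : ℂ) :
    Ffun β u z = ∑' k, u k * lagrangeCoeff β z k := by
  simp only [Ffun, lagrangeCoeff, div_eq_mul_inv, mul_assoc]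

lemma Ffun_sub_Ffun {β : ℝ} {u v : ℕ → ℂ} {z : ℂ}
    (hu : Summable fun k => u k * lagrangeCoeff β z k)
    (hv : Summable fun k => v k * lagrangeCoeff β z k) :
    Ffun β u z - Ffun β v z = ∑' k, (u k - v k) * lagrangeCoeff β z k := by
  simp only [Ffun_eq_tsum, ← hu.tsum_sub hv, sub_mul]

lemma summable_mul_of_norm_le {c L : ℕ → ℂ} {C : ℝ} (hc : ∀ k, ‖c k‖ ≤ C)
    (hL : Summable fun k => ‖L k‖) : Summable fun k => c k * L k :=
  Summable.of_norm_bounded (hL.mul_left C) fun k =>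
    (norm_mul_le _ _).trans (mul_le_mul_of_nonneg_right (hc k) (norm_nonneg _))

lemma norm_tsum_mul_le_of_geometric {d L : ℕ → ℂ} {M A r : ℝ} (hd0 : d 0 = 0)
    (hd : ∀ k, ‖d k‖ ≤ M) (hL : ∀ k, ‖L (k + 1)‖ ≤ A * r ^ k) (hr0 : 0 ≤ r) (hr1 : r < 1) :
    ‖∑' k, d k * L k‖ ≤ M * (A * (1 - r)⁻¹) := by
  have hM : 0 ≤ M := (norm_nonneg _).trans (hd 0)
  have hgeom : Summable fun k => M * (A * r ^ k) :=
    ((summable_geometric_of_lt_one hr0 hr1).mul_left A).mul_left M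
  have hbound : ∀ k, ‖d (k + 1) * L (k + 1)‖ ≤ M * (A * r ^ k) := fun k => by
    rw [norm_mul]
    exact mul_le_mul (hd _) (hL k) (norm_nonneg _) hM
  have hs : Summable fun k => ‖d (k + 1) * L (k + 1)‖ :=
    hgeom.of_nonneg_of_le (fun _ => norm_nonneg _) hbound
  have h1 : Summable fun k => d k * L k := (summable_nat_add_iff 1).mp hs.of_norm
  rw [h1.tsum_eq_zero_add, hd0, zero_mul, zero_add]
  calc ‖∑' k, d (k + 1) * L (k + 1)‖ ≤ ∑' k, M * (A * r ^ k) :=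
        (norm_tsum_le_tsum_norm hs).trans (hs.tsum_le_tsum hbound hgeom)
    _ = M * (A * (1 - r)⁻¹) := by
        rw [tsum_mul_left, tsum_mul_left, tsum_geometric_of_lt_one hr0 hr1]

lemma norm_prod_one_sub_four_pow_ge (k : ℕ) :
    3 * 15 ^ k ≤ ‖∏ j ∈ range (k + 1), (1 - (4 : ℂ) ^ (k + 1) / (4 : ℂ) ^ j)‖ := by
  have hlast : ‖1 - (4 : ℂ) ^ (k + 1) / (4 : ℂ) ^ k‖ = 3 := by
    rw [pow_succ, mul_div_cancel_left₀ _ (pow_ne_zero _ (by norm_num : (4 : ℂ) ≠ 0))]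
    norm_num
  have hfar : ∀ j ∈ range k, (15 : ℝ) ≤ ‖1 - (4 : ℂ) ^ (k + 1) / (4 : ℂ) ^ j‖ := fun j hj => by
    have h16 : (16 : ℝ) ≤ ‖(4 : ℂ) ^ (k + 1) / (4 : ℂ) ^ j‖ := by
      rw [norm_div, norm_pow, norm_pow, Complex.norm_ofNat, le_div_iff₀ (by positivity),
        show (16 : ℝ) = 4 ^ 2 by norm_num, ← pow_add]
      exact pow_le_pow_right₀ (by norm_num) (by simp at hj; omega)
    linarith [norm_sub_norm_le ((4 : ℂ) ^ (k + 1) / (4 : ℂ) ^ j) 1, norm_sub_rev (1 : ℂ)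
      ((4 : ℂ) ^ (k + 1) / (4 : ℂ) ^ j), norm_one (α := ℂ)]
  rw [prod_range_succ, norm_mul, hlast, mul_comm]
  gcongr
  calc (15 : ℝ) ^ k = ∏ _j ∈ range k, 15 := by rw [prod_const, card_range]
    _ ≤ _ := by
      rw [norm_prod]
      exact prod_le_prod (fun _ _ => by norm_num) hfar

lemma norm_deriv_Wprod_four_pow_ge (k : ℕ) :
    3 * 15 ^ k * Real.exp (-(2 / 3)) / 4 ^ (k + 1) ≤
      ‖deriv (Wprod 4) (((4 : ℝ) : ℂ) ^ (k + 1))‖ := by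
  have hW : Real.exp (-(2 / 3)) ≤ ‖Wprod 4 (4 : ℂ)⁻¹‖ := by
    have := Wprod.exp_le_norm (β := 4) (x := 4⁻¹) (by norm_num) (by norm_num) (by norm_num)
    norm_num at this
    rwa [one_div] at this
  rw [(Wprod.hasDerivAt_pow (by norm_num) (k + 1)).deriv, norm_div, norm_neg, norm_mul, norm_pow,
    Complex.norm_real, Real.norm_of_nonneg (by norm_num), Complex.ofReal_ofNat]
  gcongr
  exact norm_prod_one_sub_four_pow_ge k

lemma norm_lagrangeCoeff_four_succ_le {l : ℕ} (hl : 1 ≤ l) (k : ℕ) :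
    ‖lagrangeCoeff 4 ((4 : ℂ) ^ l)⁻¹ (k + 1)‖ ≤ Real.exp (2 / 3) * (16 / 45) * (1 / 15) ^ k := by
  set z : ℂ := ((4 : ℂ) ^ l)⁻¹
  set p : ℝ := 4 ^ (k + 1)
  have hp : 4 ≤ p := le_self_pow₀ (by norm_num) (by omega)
  have hz : ‖z‖ ≤ 1 / 4 := by
    rw [norm_inv, norm_pow, Complex.norm_ofNat, one_div]
    exact inv_anti₀ (by norm_num) (le_self_pow₀ (by norm_num) (by omega))
  have hWz : ‖Wprod 4 z‖ ≤ 1 := by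
    have := Wprod.norm_le_one (β := 4) (x := (4 ^ l)⁻¹) (by norm_num) (by positivity)
      (inv_le_one_of_one_le₀ (one_le_pow₀ (by norm_num)))
    push_cast at this
    exact this
  have hsub : 15 / 16 * p ≤ ‖z - ((4 : ℝ) : ℂ) ^ (k + 1)‖ := by
    have ha : ‖((4 : ℝ) : ℂ) ^ (k + 1)‖ = p := by simp [p]
    linarith [norm_sub_norm_le (((4 : ℝ) : ℂ) ^ (k + 1)) z, norm_sub_rev z (((4 : ℝ) : ℂ) ^ (k + 1))]
  have hD := norm_deriv_Wprod_four_pow_ge k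
  calc ‖lagrangeCoeff 4 z (k + 1)‖
      = ‖Wprod 4 z‖ / (‖deriv (Wprod 4) (((4 : ℝ) : ℂ) ^ (k + 1))‖ *
          ‖z - ((4 : ℝ) : ℂ) ^ (k + 1)‖) := by
        rw [lagrangeCoeff, norm_mul, norm_inv, norm_div]
        ring
    _ ≤ 1 / (3 * 15 ^ k * Real.exp (-(2 / 3)) / p * (15 / 16 * p)) := by gcongr
    _ = Real.exp (2 / 3) * (16 / 45) * (1 / 15) ^ k := by
        rw [Real.exp_neg, div_pow, one_pow]
        field_simp
        norm_num

lemma summable_norm_lagrangeCoeff_four {l : ℕ} (hl : 1 ≤ l) :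
    Summable fun k => ‖lagrangeCoeff 4 ((4 : ℂ) ^ l)⁻¹ k‖ := by
  refine (summable_nat_add_iff 1).mp (Summable.of_nonneg_of_le (fun _ => norm_nonneg _)
    (norm_lagrangeCoeff_four_succ_le hl) ?_)
  exact (summable_geometric_of_lt_one (by norm_num) (by norm_num)).mul_left _

lemma Real.exp_two_thirds_lt : Real.exp (2 / 3) < 9 / 4 := by
  have h := Real.exp_bound_div_one_sub_of_interval' (x := 1 / 3) (by norm_num) (by norm_num)
  norm_num at h
  have hsq : Real.exp (2 / 3) = Real.exp (1 / 3) ^ 2 := by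
    rw [← Real.exp_nat_mul]
    norm_num
  nlinarith [Real.exp_pos (1 / 3)]

/-- for bounded complex sequences u, v with u₀ = v₀,
sup_{l ≥ 1} |F_u⁴(4^{-l}) - F_v⁴(4^{-l})| ≤ (64·e^{2/3}/165) · sup_{k ≥ 0} |u_k - v_k|,
and 64·e^{2/3}/165 < 1. -/
theorem statement7 (u v : ℕ → ℂ)
    (hu : ∃ C : ℝ, ∀ k : ℕ, ‖u k‖ ≤ C)
    (hv : ∃ C : ℝ, ∀ k : ℕ, ‖v k‖ ≤ C)
    (h0 : u 0 = v 0) :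
    (∀ l : ℕ, 1 ≤ l →
      ‖Ffun 4 u (((4 : ℂ) ^ l)⁻¹) - Ffun 4 v (((4 : ℂ) ^ l)⁻¹)‖
        ≤ 64 * Real.exp (2 / 3) / 165 * ⨆ k : ℕ, ‖u k - v k‖) ∧
    64 * Real.exp (2 / 3) / 165 < 1 := by
  obtain ⟨Cu, hCu⟩ := hu
  obtain ⟨Cv, hCv⟩ := hv
  refine ⟨fun l hl => ?_, by linarith [Real.exp_two_thirds_lt]⟩
  have hL := summable_norm_lagrangeCoeff_four hl
  have hbdd : BddAbove (Set.range fun k => ‖u k - v k‖) := ⟨Cu + Cv, by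
    rintro _ ⟨k, rfl⟩
    exact (norm_sub_le _ _).trans (add_le_add (hCu k) (hCv k))⟩
  have hM : 0 ≤ ⨆ k, ‖u k - v k‖ := Real.iSup_nonneg fun _ => norm_nonneg _
  rw [Ffun_sub_Ffun (summable_mul_of_norm_le hCu hL) (summable_mul_of_norm_le hCv hL)]
  calc _ ≤ (⨆ k, ‖u k - v k‖) * (Real.exp (2 / 3) * (16 / 45) * (1 - 1 / 15)⁻¹) :=
        norm_tsum_mul_le_of_geometric (by rw [h0, sub_self]) (le_ciSup hbdd)
          (norm_lagrangeCoeff_four_succ_le hl) (by norm_num) (by norm_num)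
    _ ≤ _ := by nlinarith [mul_nonneg hM (Real.exp_pos (2 / 3)).le]
end

section
/- There exists a sequence (ã_j)_{j=0}^∞ of real numbers such that ∑_{j=0}^∞ |ã_j| · 4^{jk} < ∞ for every integer k ≥ 0, and ∑_{j=0}^∞ ã_j · (4^{jk} + 4^{-jk}) = (-1)^k for every integer k ≥ 0. -/
/-!
Write `D_j = dickson 1 1 j`, so that `D_j (y + y⁻¹) = y ^ j + y⁻¹ ^ j`, and `x_k = 4 ^ k + 4⁻ᵏ`.
Newton interpolation of a sequence with `|f k| ≤ 1`, here `(-1) ^ k`, at the nodes `x_k`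
gives `∑ₙ dₙ Ωₙ (x_k) = f k` with `Ωₙ t = ∏_{i<n} (t - x_i)`; expanding `Ωₙ = ∑ⱼ cₙⱼ Dⱼ`
and regrouping yields `aⱼ = ∑ₙ dₙ cₙⱼ`. The regrouping is justified by absolute convergence.
Since `x_N - x_i ≥ 4 ^ N / 2` for `i < N`, the triangular recursion for `dₙ` forces
`|dₙ| · 4 ^ (n(n-1)/2) ≤ 2 (3/4) ^ n`. The `|cₙⱼ|` are dominated by the (nonnegative)
coefficients of `∏_{i<n} (t + x_i)`, whose value at `x_k` is at most `C_k · 4 ^ (n(n-1)/2)`,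
and `Dⱼ (x_k) ≥ 4 ^ (jk)`.
-/

open Finset Polynomial

namespace FourPowInterpolation

/-- Multiplication by `X` in the basis `D_j`: `X D_0 = 2 D_1` and `X D_{j+1} = D_{j+2} + D_j`. -/
def dicksonMulX (v : ℕ → ℝ) : ℕ → ℝ
  | 0 => v 1
  | 1 => v 2 + 2 * v 0
  | j + 2 => v (j + 1) + v (j + 3)

/-- The coefficients of `∏_{i<n} (X - s i)` in the basis `D_j`; the `1 / 2` is because `D_0 = 2`. -/
noncomputable def dicksonCoeff (s : ℕ → ℝ) : ℕ → ℕ → ℝ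
  | 0 => Pi.single 0 (1 / 2)
  | n + 1 => fun j => dicksonMulX (dicksonCoeff s n) j - s n * dicksonCoeff s n j

def nodeProd (x : ℕ → ℝ) (n : ℕ) (t : ℝ) : ℝ := ∏ i ∈ range n, (t - x i)

lemma eval_dickson_zero (t : ℝ) : (dickson 1 (1 : ℝ) 0).eval t = 2 := by
  simp [dickson_zero]; norm_num

lemma eval_dickson_add_two (j : ℕ) (t : ℝ) :
    (dickson 1 (1 : ℝ) (j + 2)).eval t =
      t * (dickson 1 (1 : ℝ) (j + 1)).eval t - (dickson 1 (1 : ℝ) j).eval t := by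
  simp [dickson_add_two]

lemma dicksonCoeff_eq_zero_of_lt (s : ℕ → ℝ) : ∀ {n j : ℕ}, n < j → dicksonCoeff s n j = 0
  | 0, j, h => by simp [dicksonCoeff, h.ne']
  | n + 1, j + 2, h => by
    simp only [dicksonCoeff, dicksonMulX]
    rw [dicksonCoeff_eq_zero_of_lt s (j := j + 1) (by omega),
      dicksonCoeff_eq_zero_of_lt s (j := j + 3) (by omega),
      dicksonCoeff_eq_zero_of_lt s (j := j + 2) (by omega)]
    ring
  | n + 1, 0, h | n + 1, 1, h => by omega

lemma sum_dicksonMulX_mul {D : ℕ → ℝ} {t : ℝ} (hD0 : t * D 0 = 2 * D 1)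
    (hD : ∀ j, t * D (j + 1) = D (j + 2) + D j) {v : ℕ → ℝ} {n : ℕ}
    (hv : ∀ j, n < j → v j = 0) :
    ∑ j ∈ range (n + 2), dicksonMulX v j * D j = t * ∑ j ∈ range (n + 1), v j * D j := by
  have hshift : ∑ j ∈ range (n + 2), v (j + 1) * D j = ∑ j ∈ range n, v (j + 1) * D j := by
    simp [sum_range_succ, hv]
  rw [sum_range_succ' _ (n + 1), sum_range_succ', mul_sum, sum_range_succ']
  rw [sum_range_succ' _ (n + 1), sum_range_succ'] at hshift
  simp only [dicksonMulX, mul_left_comm t, hD, hD0, add_mul, mul_add, sum_add_distrib]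
    at hshift ⊢
  linarith

lemma sum_dicksonCoeff_mul_eval (s : ℕ → ℝ) (n : ℕ) (t : ℝ) :
    ∑ j ∈ range (n + 1), dicksonCoeff s n j * (dickson 1 (1 : ℝ) j).eval t = nodeProd s n t := by
  induction n with
  | zero => norm_num [dicksonCoeff, nodeProd]
  | succ n ih =>
    have hsucc : ∑ j ∈ range (n + 2), dicksonCoeff s n j * (dickson 1 (1 : ℝ) j).eval t =
        nodeProd s n t := by
      rw [sum_range_succ, ih, dicksonCoeff_eq_zero_of_lt s (Nat.lt_succ_self n), zero_mul,
        add_zero]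
    have hmulX := sum_dicksonMulX_mul (D := fun j => (dickson 1 (1 : ℝ) j).eval t) (t := t)
      (by simp only [eval_dickson_zero, dickson_one, eval_X]; ring)
      (fun j => by simp only [eval_dickson_add_two]; ring)
      (fun j hj => dicksonCoeff_eq_zero_of_lt s (n := n) hj)
    simp only [dicksonCoeff, sub_mul, sum_sub_distrib, mul_assoc, ← mul_sum, hsucc, hmulX, ih]
    simp only [nodeProd, prod_range_succ]
    ring

lemma hasSum_dicksonCoeff_mul_eval (s : ℕ → ℝ) (n : ℕ) (t : ℝ) :
    HasSum (fun j => dicksonCoeff s n j * (dickson 1 (1 : ℝ) j).eval t) (nodeProd s n t) := by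
  rw [← sum_dicksonCoeff_mul_eval]
  refine hasSum_sum_of_ne_finset_zero fun j hj => ?_
  rw [dicksonCoeff_eq_zero_of_lt s (by simpa using hj), zero_mul]

lemma abs_dicksonMulX_le {u v : ℕ → ℝ} (h : ∀ j, |u j| ≤ v j) :
    ∀ j, |dicksonMulX u j| ≤ dicksonMulX v j
  | 0 => h 1
  | 1 => by
    simp only [dicksonMulX]
    have := abs_add_le (u 2) (2 * u 0)
    rw [abs_mul, abs_two] at this
    linarith [h 0, h 2]
  | j + 2 => (abs_add_le _ _).trans (add_le_add (h _) (h _))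

lemma abs_dicksonCoeff_le (s : ℕ → ℝ) :
    ∀ n j, |dicksonCoeff s n j| ≤ dicksonCoeff (fun i => -|s i|) n j
  | 0, j => by
    rcases eq_or_ne j 0 with rfl | hj
    · simp [dicksonCoeff]
    · simp [dicksonCoeff, hj]
  | n + 1, j => by
    have ih := abs_dicksonCoeff_le s n
    simp only [dicksonCoeff, neg_mul, sub_neg_eq_add]
    calc |dicksonMulX (dicksonCoeff s n) j - s n * dicksonCoeff s n j|
        ≤ |dicksonMulX (dicksonCoeff s n) j| + |s n| * |dicksonCoeff s n j| := by
          rw [← abs_mul]; exact abs_sub _ _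
      _ ≤ _ := add_le_add (abs_dicksonMulX_le ih j)
          (mul_le_mul_of_nonneg_left (ih j) (abs_nonneg _))

lemma abs_mul_dicksonCoeff_le (a : ℝ) (s : ℕ → ℝ) (n j : ℕ) :
    |a * dicksonCoeff s n j| ≤ |a| * dicksonCoeff (fun i => -|s i|) n j := by
  rw [abs_mul]
  exact mul_le_mul_of_nonneg_left (abs_dicksonCoeff_le s n j) (abs_nonneg a)

/-- Newton's divided differences of `f` at the nodes `x`, by forward substitution in the
triangular system `∑_{m ≤ k} newtonCoeff x f m * nodeProd x m (x k) = f k`. -/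
noncomputable def newtonCoeff (x f : ℕ → ℝ) (n : ℕ) : ℝ :=
  (f n - ∑ m : Fin n, newtonCoeff x f m * nodeProd x m (x n)) / nodeProd x n (x n)

lemma newtonCoeff_mul_nodeProd_self {x : ℕ → ℝ} (f : ℕ → ℝ) {n : ℕ}
    (h : nodeProd x n (x n) ≠ 0) :
    newtonCoeff x f n * nodeProd x n (x n) =
      f n - ∑ m ∈ range n, newtonCoeff x f m * nodeProd x m (x n) := by
  rw [newtonCoeff, div_mul_cancel₀ _ h,
    Fin.sum_univ_eq_sum_range (fun m => newtonCoeff x f m * nodeProd x m (x n))]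

lemma nodeProd_eq_zero_of_lt (x : ℕ → ℝ) {k n : ℕ} (h : k < n) : nodeProd x n (x k) = 0 :=
  prod_eq_zero (mem_range.mpr h) (sub_self _)

lemma nodeProd_self_ne_zero {x : ℕ → ℝ} (hx : Function.Injective x) (n : ℕ) :
    nodeProd x n (x n) ≠ 0 :=
  prod_ne_zero_iff.mpr fun _ hi => sub_ne_zero.mpr (hx.ne (mem_range.mp hi).ne')

lemma hasSum_newtonCoeff_mul_nodeProd {x : ℕ → ℝ} (hx : Function.Injective x) (f : ℕ → ℝ)
    (k : ℕ) : HasSum (fun m => newtonCoeff x f m * nodeProd x m (x k)) (f k) := by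
  have hsum : ∑ m ∈ range (k + 1), newtonCoeff x f m * nodeProd x m (x k) = f k := by
    rw [sum_range_succ, newtonCoeff_mul_nodeProd_self f (nodeProd_self_ne_zero hx k)]
    ring
  rw [← hsum]
  refine hasSum_sum_of_ne_finset_zero fun m hm => ?_
  rw [nodeProd_eq_zero_of_lt x (by simpa using hm), mul_zero]

noncomputable def node (k : ℕ) : ℝ := 4 ^ k + (4 ^ k)⁻¹

noncomputable def weight (n : ℕ) : ℝ := ∏ i ∈ range n, (4 : ℝ) ^ i

lemma weight_succ (n : ℕ) : weight (n + 1) = weight n * 4 ^ n := prod_range_succ _ _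

lemma node_pos (k : ℕ) : 0 < node k := by rw [node]; positivity

lemma weight_pos (n : ℕ) : 0 < weight n := prod_pos fun _ _ => by positivity

lemma pow_div_two_le_node_sub {i n : ℕ} (h : i < n) : 4 ^ n / 2 ≤ node n - node i := by
  have h4 : (4 : ℝ) ^ i * 4 ≤ 4 ^ n := by
    rw [← pow_succ]; exact pow_le_pow_right₀ (by norm_num) h
  have h1 : (1 : ℝ) ≤ 4 ^ i := one_le_pow₀ (by norm_num)
  have hinv : ((4 : ℝ) ^ i)⁻¹ ≤ 1 := inv_le_one_of_one_le₀ h1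
  have hpos : (0 : ℝ) < ((4 : ℝ) ^ n)⁻¹ := by positivity
  unfold node
  linarith

lemma node_strictMono : StrictMono node := fun i n h => by
  linarith [pow_div_two_le_node_sub h, (by positivity : (0 : ℝ) < 4 ^ n / 2)]

lemma eval_dickson_node (j k : ℕ) :
    (dickson 1 (1 : ℝ) j).eval (node k) = 4 ^ (j * k) + ((4 : ℝ) ^ (j * k))⁻¹ := by
  rw [node, dickson_one_one_eval_add_inv _ _ (mul_inv_cancel₀ (by positivity)), inv_pow,
    ← pow_mul, mul_comm k j]

lemma eval_dickson_node_pos (j k : ℕ) : 0 < (dickson 1 (1 : ℝ) j).eval (node k) := by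
  rw [eval_dickson_node]; positivity

lemma nodeProd_node_nonneg {m N : ℕ} (h : m ≤ N) : 0 ≤ nodeProd node m (node N) :=
  prod_nonneg fun i hi => sub_nonneg.mpr (node_strictMono.monotone (by simp at hi; omega))

lemma nodeProd_node_mul_weight_le {m N : ℕ} (h : m < N) :
    nodeProd node m (node N) * weight (N + 1) ≤
      2 * weight (m + 1) * nodeProd node N (node N) := by
  rw [weight_succ, weight_succ]
  -- only the factor `i = m` needs the full gap `4 ^ N / 2`; the others just need `4 ^ i`
  have hfirst : (4 : ℝ) ^ N ≤ 2 * (node N - node m) := by linarith [pow_div_two_le_node_sub h]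
  have hrest : ∏ i ∈ Ico (m + 1) N, (4 : ℝ) ^ i ≤ ∏ i ∈ Ico (m + 1) N, (node N - node i) := by
    refine prod_le_prod (fun _ _ => by positivity) fun i hi => ?_
    have hiN := (mem_Ico.mp hi).2
    have : (4 : ℝ) ^ i * 4 ≤ 4 ^ N := by
      rw [← pow_succ]; exact pow_le_pow_right₀ (by norm_num) hiN
    linarith [pow_div_two_le_node_sub hiN, (by positivity : (0 : ℝ) < 4 ^ i)]
  have hIco : (∏ i ∈ Ico m N, (4 : ℝ) ^ i) * 4 ^ N ≤
      2 * 4 ^ m * ∏ i ∈ Ico m N, (node N - node i) := by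
    rw [prod_eq_prod_Ico_succ_bot h, prod_eq_prod_Ico_succ_bot h]
    calc (4 : ℝ) ^ m * (∏ i ∈ Ico (m + 1) N, (4 : ℝ) ^ i) * 4 ^ N
        = 4 ^ m * 4 ^ N * ∏ i ∈ Ico (m + 1) N, (4 : ℝ) ^ i := by ring
      _ ≤ 4 ^ m * (2 * (node N - node m)) * ∏ i ∈ Ico (m + 1) N, (node N - node i) := by
        gcongr
        exact mul_nonneg (by positivity) (by linarith [node_strictMono h])
      _ = _ := by ring
  have hΩ := nodeProd_node_nonneg h.le
  have hW : (0 : ℝ) ≤ ∏ i ∈ range m, (4 : ℝ) ^ i := by positivity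
  rw [nodeProd] at hΩ
  rw [weight, weight, nodeProd, nodeProd, ← prod_range_mul_prod_Ico (fun i => (4 : ℝ) ^ i) h.le,
    ← prod_range_mul_prod_Ico (fun i => node N - node i) h.le]
  calc _ = (∏ i ∈ range m, (node N - node i)) * (∏ i ∈ range m, (4 : ℝ) ^ i) *
        ((∏ i ∈ Ico m N, (4 : ℝ) ^ i) * 4 ^ N) := by ring
    _ ≤ (∏ i ∈ range m, (node N - node i)) * (∏ i ∈ range m, (4 : ℝ) ^ i) *
        (2 * 4 ^ m * ∏ i ∈ Ico m N, (node N - node i)) :=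
      mul_le_mul_of_nonneg_left hIco (mul_nonneg hΩ hW)
    _ = _ := by ring

lemma weight_succ_le_nodeProd_self : ∀ N : ℕ, weight (N + 1) ≤ 2 * nodeProd node N (node N)
  | 0 => by norm_num [weight, nodeProd]
  | N + 1 => by
    simpa [weight, nodeProd] using nodeProd_node_mul_weight_le (Nat.succ_pos N)

lemma le_mul_pow_of_le_mul_one_add_sum {u : ℕ → ℝ} {C : ℝ} (hC : 0 ≤ C)
    (h : ∀ n, u n ≤ C * (1 + ∑ m ∈ range n, u m)) (n : ℕ) : u n ≤ C * (1 + C) ^ n := by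
  have hsum : ∀ n, 1 + ∑ m ∈ range n, u m ≤ (1 + C) ^ n := fun n => by
    induction n with
    | zero => simp
    | succ n ih =>
      rw [sum_range_succ, pow_succ]
      nlinarith [h n]
  exact (h n).trans (mul_le_mul_of_nonneg_left (hsum n) hC)

lemma prod_add_node_le {t : ℝ} (ht : 0 ≤ t) (n : ℕ) :
    ∏ i ∈ range n, (t + node i) ≤ Real.exp (2 * (t + 1)) * weight n := by
  have hfactor : ∀ i, t + node i ≤ 4 ^ i * (1 + (t + 1) * (1 / 2) ^ i) := fun i => by
    have h2 : (4 : ℝ) ^ i * (1 / 2) ^ i = 2 ^ i := by rw [← mul_pow]; norm_num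
    have h1 : (1 : ℝ) ≤ 2 ^ i := one_le_pow₀ (by norm_num)
    have hinv : ((4 : ℝ) ^ i)⁻¹ ≤ 1 := inv_le_one_of_one_le₀ (one_le_pow₀ (by norm_num))
    rw [node]
    nlinarith
  calc ∏ i ∈ range n, (t + node i)
      ≤ ∏ i ∈ range n, (4 ^ i * (1 + (t + 1) * (1 / 2) ^ i)) :=
        prod_le_prod (fun i _ => by rw [node]; positivity) fun i _ => hfactor i
    _ = weight n * ∏ i ∈ range n, (1 + (t + 1) * (1 / 2) ^ i) := by rw [prod_mul_distrib, weight]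
    _ ≤ weight n * Real.exp (∑ i ∈ range n, (t + 1) * (1 / 2) ^ i) :=
        mul_le_mul_of_nonneg_left (Real.prod_one_add_le_exp_sum _ fun i => by positivity)
          (weight_pos n).le
    _ ≤ weight n * Real.exp (2 * (t + 1)) := by
        refine mul_le_mul_of_nonneg_left (Real.exp_le_exp.mpr ?_) (weight_pos n).le
        rw [← mul_sum]
        nlinarith [sum_geometric_two_le n]
    _ = _ := mul_comm _ _

section Interpolation

variable {f : ℕ → ℝ}

lemma abs_newtonCoeff_mul_weight_succ_le (hf : ∀ k, |f k| ≤ 1) (N : ℕ) :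
    |newtonCoeff node f N| * weight (N + 1) ≤
      2 * (1 + ∑ m ∈ range N, |newtonCoeff node f m| * weight (m + 1)) := by
  set d := newtonCoeff node f
  have hΩ : 0 < nodeProd node N (node N) :=
    prod_pos fun i hi => sub_pos.mpr (node_strictMono (mem_range.mp hi))
  have hrec : |d N| * nodeProd node N (node N) ≤
      1 + ∑ m ∈ range N, |d m| * nodeProd node m (node N) := by
    rw [← abs_of_pos hΩ, ← abs_mul, newtonCoeff_mul_nodeProd_self f hΩ.ne']
    refine (abs_sub _ _).trans (add_le_add (hf N) ((abs_sum_le_sum_abs _ _).trans_eq ?_))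
    refine sum_congr rfl fun m hm => ?_
    rw [abs_mul, abs_of_nonneg (nodeProd_node_nonneg (mem_range.mp hm).le)]
  have hterm : ∀ m ∈ range N, |d m| * nodeProd node m (node N) * weight (N + 1) ≤
      2 * (|d m| * weight (m + 1)) * nodeProd node N (node N) := fun m hm => by
    have := nodeProd_node_mul_weight_le (mem_range.mp hm)
    calc _ = |d m| * (nodeProd node m (node N) * weight (N + 1)) := by ring
      _ ≤ |d m| * (2 * weight (m + 1) * nodeProd node N (node N)) := by gcongr
      _ = _ := by ring
  refine le_of_mul_le_mul_right ?_ hΩ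
  calc |d N| * weight (N + 1) * nodeProd node N (node N)
      = |d N| * nodeProd node N (node N) * weight (N + 1) := by ring
    _ ≤ (1 + ∑ m ∈ range N, |d m| * nodeProd node m (node N)) * weight (N + 1) :=
      mul_le_mul_of_nonneg_right hrec (weight_pos _).le
    _ = weight (N + 1) + ∑ m ∈ range N, |d m| * nodeProd node m (node N) * weight (N + 1) :=
      by rw [add_mul, one_mul, sum_mul]
    _ ≤ 2 * nodeProd node N (node N) +
        ∑ m ∈ range N, 2 * (|d m| * weight (m + 1)) * nodeProd node N (node N) :=
      add_le_add (weight_succ_le_nodeProd_self N) (sum_le_sum hterm)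
    _ = _ := by rw [← sum_mul, ← mul_sum]; ring

lemma abs_newtonCoeff_mul_weight_le (hf : ∀ k, |f k| ≤ 1) (n : ℕ) :
    |newtonCoeff node f n| * weight n ≤ 2 * (3 / 4) ^ n := by
  have h := le_mul_pow_of_le_mul_one_add_sum (u := fun m => |newtonCoeff node f m| * weight (m + 1))
    zero_le_two (abs_newtonCoeff_mul_weight_succ_le hf) n
  rw [weight_succ] at h
  rw [div_pow, mul_div_assoc', le_div_iff₀ (by positivity)]
  norm_num at h
  linarith

lemma summable_abs_newtonCoeff_mul_prod_add_node (hf : ∀ k, |f k| ≤ 1) (k : ℕ) :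
    Summable fun n => |newtonCoeff node f n| * ∏ i ∈ range n, (node k + node i) := by
  refine Summable.of_nonneg_of_le
    (fun n => mul_nonneg (abs_nonneg _) <| prod_nonneg fun i _ =>
      (add_pos (node_pos k) (node_pos i)).le)
    (fun n => ?_)
    ((summable_geometric_of_lt_one (by norm_num) (by norm_num : (3 / 4 : ℝ) < 1)).mul_left
      (Real.exp (2 * (node k + 1)) * 2))
  calc |newtonCoeff node f n| * ∏ i ∈ range n, (node k + node i)
      ≤ |newtonCoeff node f n| * (Real.exp (2 * (node k + 1)) * weight n) :=
        mul_le_mul_of_nonneg_left (prod_add_node_le (node_pos k).le n) (abs_nonneg _)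
    _ = Real.exp (2 * (node k + 1)) * (|newtonCoeff node f n| * weight n) := by ring
    _ ≤ Real.exp (2 * (node k + 1)) * (2 * (3 / 4) ^ n) :=
        mul_le_mul_of_nonneg_left (abs_newtonCoeff_mul_weight_le hf n) (Real.exp_pos _).le
    _ = _ := by ring

lemma summable_abs_newtonCoeff_mul_dicksonCoeff_mul_eval (hf : ∀ k, |f k| ≤ 1) (k : ℕ) :
    Summable fun q : ℕ × ℕ => |newtonCoeff node f q.1| *
      dicksonCoeff (fun i => -|node i|) q.1 q.2 * (dickson 1 (1 : ℝ) q.2).eval (node k) := by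
  have hc : ∀ n j, 0 ≤ dicksonCoeff (fun i => -|node i|) n j := fun n j =>
    (abs_nonneg _).trans (abs_dicksonCoeff_le node n j)
  have hrow : ∀ n, HasSum (fun j => |newtonCoeff node f n| *
      dicksonCoeff (fun i => -|node i|) n j * (dickson 1 (1 : ℝ) j).eval (node k))
      (|newtonCoeff node f n| * ∏ i ∈ range n, (node k + node i)) := fun n => by
    have h := (hasSum_dicksonCoeff_mul_eval (fun i => -|node i|) n (node k)).mul_left
      |newtonCoeff node f n|
    have hnode : ∀ i, |node i| = node i := fun i => abs_of_pos (node_pos i)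
    simpa only [nodeProd, hnode, sub_neg_eq_add, mul_assoc] using h
  refine (summable_prod_of_nonneg fun q => ?_).mpr ⟨fun n => (hrow n).summable, ?_⟩
  · exact mul_nonneg (mul_nonneg (abs_nonneg _) (hc _ _)) (eval_dickson_node_pos _ _).le
  simp only [fun n => (hrow n).tsum_eq]
  exact summable_abs_newtonCoeff_mul_prod_add_node hf k

lemma summable_abs_newtonCoeff_mul_dicksonCoeff (hf : ∀ k, |f k| ≤ 1) (j : ℕ) :
    Summable fun n => |newtonCoeff node f n| * dicksonCoeff (fun i => -|node i|) n j :=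
  (summable_mul_right_iff (eval_dickson_node_pos j 0).ne').mp
    ((summable_abs_newtonCoeff_mul_dicksonCoeff_mul_eval hf 0).prod_symm.prod_factor j)

noncomputable def interpCoeff (f : ℕ → ℝ) (j : ℕ) : ℝ :=
  ∑' n, newtonCoeff node f n * dicksonCoeff node n j

lemma abs_interpCoeff_le (hf : ∀ k, |f k| ≤ 1) (j : ℕ) :
    |interpCoeff f j| ≤ ∑' n, |newtonCoeff node f n| * dicksonCoeff (fun i => -|node i|) n j :=
  tsum_of_norm_bounded (f := fun n => newtonCoeff node f n * dicksonCoeff node n j)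
    (summable_abs_newtonCoeff_mul_dicksonCoeff hf j).hasSum fun n =>
      abs_mul_dicksonCoeff_le _ node n j

lemma summable_abs_interpCoeff_mul_pow (hf : ∀ k, |f k| ≤ 1) (k : ℕ) :
    Summable fun j => |interpCoeff f j| * 4 ^ (j * k) := by
  refine Summable.of_nonneg_of_le (fun j => by positivity) (fun j => ?_)
    (summable_abs_newtonCoeff_mul_dicksonCoeff_mul_eval hf k).prod_symm.prod
  calc |interpCoeff f j| * 4 ^ (j * k)
      ≤ (∑' n, |newtonCoeff node f n| * dicksonCoeff (fun i => -|node i|) n j) *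
          (dickson 1 (1 : ℝ) j).eval (node k) := by
        refine mul_le_mul (abs_interpCoeff_le hf j) ?_ (by positivity) ((abs_nonneg _).trans
          (abs_interpCoeff_le hf j))
        rw [eval_dickson_node]
        exact le_add_of_nonneg_right (by positivity)
    _ = _ := tsum_mul_right.symm

lemma hasSum_interpCoeff_mul (hf : ∀ k, |f k| ≤ 1) (k : ℕ) :
    HasSum (fun j => interpCoeff f j * (4 ^ (j * k) + ((4 : ℝ) ^ (j * k))⁻¹)) (f k) := by
  set F : ℕ × ℕ → ℝ := fun q => newtonCoeff node f q.1 * dicksonCoeff node q.1 q.2 *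
    (dickson 1 (1 : ℝ) q.2).eval (node k)
  have hF : Summable F :=
    (summable_abs_newtonCoeff_mul_dicksonCoeff_mul_eval hf k).of_norm_bounded fun q => by
      rw [Real.norm_eq_abs, abs_mul, abs_of_pos (eval_dickson_node_pos _ _)]
      exact mul_le_mul_of_nonneg_right (abs_mul_dicksonCoeff_le _ node _ _)
        (eval_dickson_node_pos _ _).le
  have hrows : HasSum (fun n => newtonCoeff node f n * nodeProd node n (node k)) (∑' q, F q) :=
    hF.hasSum.prod_fiberwise fun n => by
      simpa only [F, mul_assoc] using
        (hasSum_dicksonCoeff_mul_eval node n (node k)).mul_left (newtonCoeff node f n)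
  have hcols : HasSum (fun j => interpCoeff f j * (dickson 1 (1 : ℝ) j).eval (node k))
      (∑' q, F q) := by
    refine ((Equiv.prodComm ℕ ℕ).hasSum_iff.mpr hF.hasSum).prod_fiberwise fun j => ?_
    have hcol : Summable fun n => newtonCoeff node f n * dicksonCoeff node n j :=
      (summable_abs_newtonCoeff_mul_dicksonCoeff hf j).of_norm_bounded fun n =>
        abs_mul_dicksonCoeff_le _ node n j
    exact hcol.hasSum.mul_right _
  rw [hrows.unique (hasSum_newtonCoeff_mul_nodeProd node_strictMono.injective f k)] at hcols
  simpa only [eval_dickson_node] using hcols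

end Interpolation

end FourPowInterpolation

/-- there is a real sequence (ã_j)_{j≥0} with ∑_j |ã_j|·4^{jk} < ∞ for
every k ≥ 0, and ∑_j ã_j·(4^{jk} + 4^{-jk}) = (-1)^k for every k ≥ 0. -/
theorem statement8 :
    ∃ a : ℕ → ℝ,
      (∀ k : ℕ, Summable (fun j : ℕ => |a j| * 4 ^ (j * k))) ∧
      (∀ k : ℕ, HasSum (fun j : ℕ => a j * ((4 : ℝ) ^ (j * k) + ((4 : ℝ) ^ (j * k))⁻¹))
        ((-1 : ℝ) ^ k)) := by
  have hf : ∀ k : ℕ, |(-1 : ℝ) ^ k| ≤ 1 := fun k => by simp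
  exact ⟨FourPowInterpolation.interpCoeff fun k => (-1) ^ k,
    FourPowInterpolation.summable_abs_interpCoeff_mul_pow hf,
    FourPowInterpolation.hasSum_interpCoeff_mul hf⟩
end

section
/- There exists a sequence (a_j)_{j∈ℤ} of real numbers such that, setting b_j := 4^j for j ∈ ℤ: (a) for every δ > 0 and every k ∈ ℤ, ∑_{j∈ℤ} 2^{δ|j|} · |a_j| · b_j^k < ∞; and (b) for every k ∈ ℤ, ∑_{j∈ℤ} a_j · (-b_j)^k = 1, the series converging absolutely. -/
/-!
The coefficients `θ_j = (-1)^j 2^{j(1-j)}` of the Jacobi theta series with nome `1/4` satisfy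
`∑ θ_j (-4^j)^k = 0` for every `k ∈ ℤ`: the involution `j ↦ 2k+1-j` fixes `|θ_j| 4^{jk}` and
reverses the sign `(-1)^j`. For the weights `w_j = θ_j / (1 + 4^j)` the moments
`m_k = ∑ w_j (-4^j)^k` therefore satisfy `m_k - m_{k+1} = ∑ θ_j (-4^j)^k = 0`, so they all equal
`m_0 = ∑ w_j`. This is positive: the terms `j = 0, ±1` contribute `1/10`, the others, bounded by
`8^{-|j|}`, less than `1/28` in absolute value. Hence `a_j = w_j / m_0` works. All the series
converge because `|w_j| ≤ 2^{-|j|-j^2}` decays like a Gaussian.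
-/

open Real

theorem summable_two_rpow_mul_abs_sub_sq (C : ℝ) :
    Summable fun j : ℤ => (2 : ℝ) ^ (C * |(j : ℝ)| - (j : ℝ) ^ 2) := by
  have hT : 0 < log 2 / π := by positivity
  refine (summable_pow_mul_jacobiTheta₂_term_bound (C * log 2 / (2 * π)) hT 0).congr fun j => ?_
  rw [pow_zero, one_mul, rpow_def_of_pos two_pos, Int.cast_abs]
  congr 1
  field_simp
  ring

theorem tsum_neg_one_zpow_mul_eq_zero {n : ℤ} (hn : Odd n) {g : ℤ → ℝ}
    (hg : ∀ j, g (n - j) = g j) : ∑' j : ℤ, (-1) ^ j * g j = 0 := by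
  have hsign (j : ℤ) : (-1 : ℝ) ^ (n - j) = -(-1) ^ j := by
    rcases Int.even_or_odd j with hj | hj
    · rw [(hn.sub_even hj).neg_one_zpow, hj.neg_one_zpow]
    · rw [(hn.sub_odd hj).neg_one_zpow, hj.neg_one_zpow, neg_neg]
  have h := (Equiv.subLeft n).tsum_eq fun j => (-1 : ℝ) ^ j * g j
  simp only [Equiv.subLeft_apply, hsign, hg, neg_mul, tsum_neg] at h
  linarith

theorem sub_le_tsum_of_abs_succ_le_geometric {g : ℕ → ℝ} {c r : ℝ} (hr₀ : 0 ≤ r) (hr₁ : r < 1)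
    (hg : ∀ n, |g (n + 1)| ≤ c * r ^ n) : g 0 - c / (1 - r) ≤ ∑' n, g n := by
  have hgeom : HasSum (fun n => c * r ^ n) (c / (1 - r)) := by
    simpa [div_eq_mul_inv] using (hasSum_geometric_of_lt_one hr₀ hr₁).mul_left c
  have hsucc : Summable fun n => g (n + 1) := hgeom.summable.of_norm_bounded hg
  have htail : -(c / (1 - r)) ≤ ∑' n, g (n + 1) := by
    rw [← hgeom.tsum_eq, ← tsum_neg]
    exact hgeom.summable.neg.tsum_le_tsum (fun n => neg_le_of_abs_le (hg n)) hsucc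
  rw [((summable_nat_add_iff 1).mp hsucc).tsum_eq_zero_add]
  linarith

noncomputable def thetaCoeff (j : ℤ) : ℝ := (-1) ^ j * 2 ^ (j * (1 - j))

noncomputable def thetaWeight (j : ℤ) : ℝ := thetaCoeff j / (1 + 4 ^ j)

noncomputable def thetaWeightMoment (k : ℤ) : ℝ :=
  ∑' j : ℤ, thetaWeight j * (-(4 : ℝ) ^ j) ^ k

theorem four_zpow (j : ℤ) : (4 : ℝ) ^ j = 2 ^ (2 * j) := by
  rw [zpow_mul]; norm_num

theorem neg_four_zpow_zpow (j k : ℤ) : (-(4 : ℝ) ^ j) ^ k = (-1) ^ k * 2 ^ (2 * j * k) := by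
  rw [neg_eq_neg_one_mul, mul_zpow, four_zpow, ← zpow_mul]

theorem two_zpow_add_abs_le (j : ℤ) : (2 : ℝ) ^ (j + |j|) ≤ 1 + 4 ^ j := by
  rcases le_total 0 j with hj | hj
  · rw [abs_of_nonneg hj, four_zpow, two_mul]
    linarith
  · rw [abs_of_nonpos hj, add_neg_cancel, zpow_zero]
    linarith [zpow_pos (four_pos : (0 : ℝ) < 4) j]

theorem abs_thetaWeight_le (j : ℤ) : |thetaWeight j| ≤ 2 ^ (-|j| - j ^ 2) := by
  have hden : (0 : ℝ) < 1 + 4 ^ j := by positivity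
  rw [thetaWeight, thetaCoeff, abs_div, abs_mul, abs_neg_one_zpow, one_mul, abs_of_pos hden,
    abs_of_pos (by positivity), div_le_iff₀ hden]
  calc (2 : ℝ) ^ (j * (1 - j)) = 2 ^ (-|j| - j ^ 2) * 2 ^ (j + |j|) := by
        rw [← zpow_add₀ two_ne_zero]; ring_nf
    _ ≤ 2 ^ (-|j| - j ^ 2) * (1 + 4 ^ j) := by
        gcongr; exact two_zpow_add_abs_le j

theorem summable_two_rpow_mul_abs_thetaWeight_mul (δ : ℝ) (k : ℤ) :
    Summable fun j : ℤ => (2 : ℝ) ^ (δ * |(j : ℝ)|) * |thetaWeight j| * (4 : ℝ) ^ (j * k) := by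
  refine (summable_two_rpow_mul_abs_sub_sq (δ + 2 * |(k : ℝ)|)).of_nonneg_of_le
    (fun j => by positivity) fun j => ?_
  calc (2 : ℝ) ^ (δ * |(j : ℝ)|) * |thetaWeight j| * 4 ^ (j * k)
      ≤ 2 ^ (δ * |(j : ℝ)|) * 2 ^ (-|j| - j ^ 2) * 2 ^ (2 * (j * k)) := by
        rw [four_zpow]; gcongr; exact abs_thetaWeight_le j
    _ = 2 ^ (δ * |(j : ℝ)| + ((-|j| - j ^ 2 + 2 * (j * k) : ℤ) : ℝ)) := by
        rw [rpow_add two_pos, rpow_intCast, zpow_add₀ two_ne_zero, mul_assoc]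
    _ ≤ 2 ^ ((δ + 2 * |(k : ℝ)|) * |(j : ℝ)| - (j : ℝ) ^ 2) := by
        gcongr
        · norm_num
        · have : (j : ℝ) * k ≤ |(j : ℝ)| * |(k : ℝ)| := by
            rw [← abs_mul]; exact le_abs_self _
          push_cast
          nlinarith [abs_nonneg (j : ℝ)]

theorem summable_abs_thetaWeight_mul (k : ℤ) :
    Summable fun j : ℤ => |thetaWeight j * (-(4 : ℝ) ^ j) ^ k| := by
  refine (summable_two_rpow_mul_abs_thetaWeight_mul 0 k).congr fun j => ?_
  rw [zero_mul, rpow_zero, one_mul, abs_mul, neg_four_zpow_zpow, abs_mul, abs_neg_one_zpow,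
    one_mul, abs_of_pos (zpow_pos (two_pos : (0 : ℝ) < 2) _), four_zpow, mul_assoc]

theorem summable_thetaWeight_mul (k : ℤ) :
    Summable fun j : ℤ => thetaWeight j * (-(4 : ℝ) ^ j) ^ k :=
  (summable_abs_thetaWeight_mul k).of_abs

theorem tsum_thetaCoeff_mul_eq_zero (k : ℤ) :
    ∑' j : ℤ, thetaCoeff j * (-(4 : ℝ) ^ j) ^ k = 0 := by
  have hterm (j : ℤ) : thetaCoeff j * (-(4 : ℝ) ^ j) ^ k
      = (-1) ^ j * ((-1) ^ k * 2 ^ (j * (2 * k + 1 - j))) := by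
    rw [thetaCoeff, neg_four_zpow_zpow, show j * (2 * k + 1 - j) = j * (1 - j) + 2 * j * k by ring,
      zpow_add₀ two_ne_zero]
    ring
  simp_rw [hterm]
  exact tsum_neg_one_zpow_mul_eq_zero ⟨k, rfl⟩ fun j => by ring_nf

theorem thetaWeightMoment_add_one (k : ℤ) : thetaWeightMoment (k + 1) = thetaWeightMoment k := by
  have hterm (j : ℤ) :
      thetaWeight j * (-(4 : ℝ) ^ j) ^ k - thetaWeight j * (-(4 : ℝ) ^ j) ^ (k + 1)
        = thetaCoeff j * (-(4 : ℝ) ^ j) ^ k := by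
    rw [zpow_add_one₀ (neg_ne_zero.mpr (by positivity)), thetaWeight]
    field_simp
    ring
  have h := (summable_thetaWeight_mul k).tsum_sub (summable_thetaWeight_mul (k + 1))
  simp_rw [hterm, tsum_thetaCoeff_mul_eq_zero] at h
  rw [thetaWeightMoment, thetaWeightMoment]
  linarith

theorem thetaWeightMoment_eq_tsum_thetaWeight (k : ℤ) :
    thetaWeightMoment k = ∑' j : ℤ, thetaWeight j := by
  have hper : Function.Periodic thetaWeightMoment 1 := thetaWeightMoment_add_one
  simpa [thetaWeightMoment] using hper.int_mul_eq k

theorem abs_thetaWeight_le_eighth_zpow {j : ℤ} (hj : 2 ≤ |j|) : |thetaWeight j| ≤ 8 ^ (-|j|) :=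
  calc |thetaWeight j| ≤ 2 ^ (-|j| - j ^ 2) := abs_thetaWeight_le j
    _ ≤ 2 ^ (3 * -|j|) := zpow_le_zpow_right₀ one_le_two (by nlinarith [sq_abs j])
    _ = 8 ^ (-|j|) := by rw [zpow_mul]; norm_num

theorem tsum_thetaWeight_pos : 0 < ∑' j : ℤ, thetaWeight j := by
  have hw : Summable thetaWeight := by simpa using summable_thetaWeight_mul 0
  have htail (n : ℕ) (j : ℤ) (hj : |j| = n + 2) : |thetaWeight j| ≤ 1 / 64 * (1 / 8) ^ n := by
    refine (abs_thetaWeight_le_eighth_zpow (by omega)).trans_eq ?_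
    rw [hj, zpow_neg, zpow_add₀ (by norm_num), zpow_natCast, div_pow]
    norm_num [mul_comm]
  have hpos := sub_le_tsum_of_abs_succ_le_geometric (g := fun n : ℕ => thetaWeight (n + 1))
    (by norm_num) (by norm_num) fun n =>
      htail n _ (by rw [abs_of_nonneg (by positivity)]; push_cast; ring)
  have hneg := sub_le_tsum_of_abs_succ_le_geometric (g := fun n : ℕ => thetaWeight (-(n + 1)))
    (by norm_num) (by norm_num) fun n =>
      htail n _ (by rw [abs_neg, abs_of_nonneg (by positivity)]; push_cast; ring)
  rw [tsum_of_add_one_of_neg_add_one (hw.comp_injective fun a b h => by simpa using h)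
    (hw.comp_injective fun a b h => by simpa using h)]
  norm_num [thetaWeight, thetaCoeff] at hpos hneg ⊢
  linarith

/-- there is a real sequence (a_j)_{j∈ℤ} such that, with b_j = 4^j:
(a) for every δ > 0 and k ∈ ℤ, ∑_{j∈ℤ} 2^{δ|j|}·|a_j|·b_j^k < ∞ (note b_j^k = 4^{jk});
(b) for every k ∈ ℤ, ∑_{j∈ℤ} a_j·(-b_j)^k = 1, the series converging absolutely. -/
theorem statement9 :
    ∃ a : ℤ → ℝ,
      (∀ δ : ℝ, 0 < δ → ∀ k : ℤ,
        Summable (fun j : ℤ => (2 : ℝ) ^ (δ * |(j : ℝ)|) * |a j| * (4 : ℝ) ^ (j * k))) ∧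
      (∀ k : ℤ,
        Summable (fun j : ℤ => |a j * (-(4 : ℝ) ^ j) ^ k|) ∧
        HasSum (fun j : ℤ => a j * (-(4 : ℝ) ^ j) ^ k) 1) := by
  set M := ∑' j : ℤ, thetaWeight j
  have hM : 0 < M := tsum_thetaWeight_pos
  refine ⟨fun j => thetaWeight j / M, fun δ _ k => ?_, fun k => ⟨?_, ?_⟩⟩
  · refine ((summable_two_rpow_mul_abs_thetaWeight_mul δ k).div_const M).congr fun j => ?_
    rw [abs_div, abs_of_pos hM]
    ring
  · refine ((summable_abs_thetaWeight_mul k).div_const M).congr fun j => ?_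
    rw [div_mul_eq_mul_div, abs_div, abs_of_pos hM]
  · have h := (summable_thetaWeight_mul k).hasSum.div_const M
    rw [← thetaWeightMoment, thetaWeightMoment_eq_tsum_thetaWeight, div_self hM.ne'] at h
    simpa only [div_mul_eq_mul_div] using h
end

section
/- Let n ≥ 1, 0 < p < ∞ and δ > 0, let X be a Banach space, and let a = (a_j)_{j∈ℤ} ⊂ ℝ and b = (b_j)_{j∈ℤ} ⊂ (0,∞) satisfy A := ∑_{j∈ℤ} 2^{δ|j|} |a_j| b_j^{-1/p} < ∞. Then there is a constant C = C(p, δ) > 0, independent of n, X, a, b, such that for every strongly measurable f : ℝ^n → X with ∫_{{x_n > 0}} ‖f(x)‖_X^p dx < ∞, the series ∑_{j∈ℤ} a_j f(x', -b_j x_n) converges absolutely in X for almost every x = (x', x_n) with x_n < 0, and (∫_{{x_n < 0}} ‖∑_{j∈ℤ} a_j f(x', -b_j x_n)‖_X^p dx)^{1/p} ≤ C · A · (∫_{{x_n > 0}} ‖f(x)‖_X^p dx)^{1/p}. -/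
/-!
The dilation `x ↦ (x', -b x_n)` maps the lower half-space onto the upper one with Jacobian `b`,
so the `j`-th term `a_j f(x', -b_j x_n)` has `Lᵖ` norm `|a_j| b_j^{-1/p} ‖f‖_p ≤ 2^{-δ|j|} A ‖f‖_p`
on `{x_n < 0}`: it is `2^{-δ|j|} g_j` with `‖g_j‖_p ≤ A ‖f‖_p`. For `p ≤ 1` the inequality
`(∑ u_j)^p ≤ ∑ u_j^p` bounds `∫ (∑_j ‖term_j‖)^p` by `∑_j 2^{-pδ|j|} A^p ‖f‖_p^p`; for `p > 1`
Jensen's inequality with the summable weights `2^{-δ|j|}` bounds it by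
`(∑_j 2^{-δ|j|})^p A^p ‖f‖_p^p`. Finiteness of this integral gives the absolute convergence a.e.
-/

open MeasureTheory

open scoped ENNReal

namespace ENNReal

variable {ι : Type*}

theorem tsum_rpow_le_rpow_tsum {q : ℝ} (hq : 1 ≤ q) (u : ι → ℝ≥0∞) :
    ∑' i, u i ^ q ≤ (∑' i, u i) ^ q := by
  classical
  rw [ENNReal.tsum_eq_iSup_sum]
  refine iSup_le fun s => ?_
  have hsum : ∑ i ∈ s, u i ^ q ≤ (∑ i ∈ s, u i) ^ q := by
    induction s using Finset.induction_on with
    | empty => simp [ENNReal.zero_rpow_of_pos (zero_lt_one.trans_le hq)]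
    | insert i s hi ih =>
      rw [Finset.sum_insert hi, Finset.sum_insert hi]
      exact (add_le_add_right ih _).trans (ENNReal.add_rpow_le_rpow_add _ _ hq)
  exact hsum.trans (ENNReal.rpow_le_rpow (ENNReal.sum_le_tsum s) (zero_le_one.trans hq))

theorem rpow_tsum_le_tsum_rpow {p : ℝ} (hp : 0 < p) (hp1 : p ≤ 1) (u : ι → ℝ≥0∞) :
    (∑' i, u i) ^ p ≤ ∑' i, u i ^ p := by
  have h := tsum_rpow_le_rpow_tsum (one_le_one_div hp hp1) (fun i => u i ^ p)
  simp only [← ENNReal.rpow_mul, mul_one_div_cancel hp.ne', ENNReal.rpow_one] at h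
  simpa only [← ENNReal.rpow_mul, one_div_mul_cancel hp.ne', ENNReal.rpow_one] using
    ENNReal.rpow_le_rpow h hp.le

theorem rpow_tsum_mul_le {p : ℝ} (hp : 1 < p) (w v : ι → ℝ≥0∞) :
    (∑' i, w i * v i) ^ p ≤ (∑' i, w i) ^ (p - 1) * ∑' i, w i * v i ^ p := by
  let _ : MeasurableSpace ι := ⊤
  set q := p.conjExponent
  have hpq : p.HolderConjugate q := .conjExponent hp
  have hsplit : ∀ i, w i * v i = w i ^ (1 / q) * (w i ^ (1 / p) * v i) := fun i => by
    rw [← mul_assoc, ← ENNReal.rpow_add_of_nonneg _ _ hpq.symm.one_div_nonneg hpq.one_div_nonneg,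
      add_comm, hpq.one_div_add_one_div, div_one, ENNReal.rpow_one]
  have holder := ENNReal.lintegral_mul_le_Lp_mul_Lq Measure.count hpq.symm
    (f := fun i => w i ^ (1 / q)) (g := fun i => w i ^ (1 / p) * v i)
    Measurable.of_discrete.aemeasurable Measurable.of_discrete.aemeasurable
  have hw : ∀ i, (w i ^ (1 / q)) ^ q = w i := fun i => by
    rw [← ENNReal.rpow_mul, one_div_mul_cancel hpq.symm.ne_zero, ENNReal.rpow_one]
  have hwv : ∀ i, (w i ^ (1 / p) * v i) ^ p = w i * v i ^ p := fun i => by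
    rw [ENNReal.mul_rpow_of_nonneg _ _ hpq.nonneg, ← ENNReal.rpow_mul,
      one_div_mul_cancel hpq.ne_zero, ENNReal.rpow_one]
  simp only [lintegral_count, Pi.mul_apply, ← hsplit, hw, hwv] at holder
  calc (∑' i, w i * v i) ^ p
      ≤ ((∑' i, w i) ^ (1 / q) * (∑' i, w i * v i ^ p) ^ (1 / p)) ^ p :=
        ENNReal.rpow_le_rpow holder hpq.nonneg
    _ = (∑' i, w i) ^ (p - 1) * ∑' i, w i * v i ^ p := by
        rw [ENNReal.mul_rpow_of_nonneg _ _ hpq.nonneg, ← ENNReal.rpow_mul, ← ENNReal.rpow_mul,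
          one_div_mul_cancel hpq.ne_zero, ENNReal.rpow_one, one_div_mul_eq_div,
          hpq.div_conj_eq_sub_one]

theorem rpow_one_div_le_mul_mul_rpow_one_div {p : ℝ} (hp : 0 < p) {a x y z : ℝ≥0∞}
    (h : a ≤ x ^ p * (y ^ p * z)) : a ^ (1 / p) ≤ x * y * z ^ (1 / p) := by
  rw [one_div, ENNReal.rpow_inv_le_iff hp, ENNReal.mul_rpow_of_nonneg _ _ hp.le,
    ← ENNReal.rpow_mul, inv_mul_cancel₀ hp.ne', ENNReal.rpow_one,
    ENNReal.mul_rpow_of_nonneg _ _ hp.le, mul_assoc]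
  exact h

end ENNReal

section WeightedSeries

variable {α ι : Type*} [MeasurableSpace α] [Countable ι] {μ : Measure α} {p : ℝ}
  {g : ι → α → ℝ≥0∞} {B : ℝ≥0∞}

theorem lintegral_rpow_tsum_mul_le_of_le_one (hp : 0 < p) (hp1 : p ≤ 1) (w : ι → ℝ≥0∞)
    (hg : ∀ i, AEMeasurable (g i) μ) (hB : ∀ i, ∫⁻ x, g i x ^ p ∂μ ≤ B) :
    ∫⁻ x, (∑' i, w i * g i x) ^ p ∂μ ≤ (∑' i, w i ^ p) * B :=
  calc ∫⁻ x, (∑' i, w i * g i x) ^ p ∂μ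
      ≤ ∫⁻ x, ∑' i, w i ^ p * g i x ^ p ∂μ := lintegral_mono fun x => by
        simpa only [ENNReal.mul_rpow_of_nonneg _ _ hp.le] using
          ENNReal.rpow_tsum_le_tsum_rpow hp hp1 fun i => w i * g i x
    _ = ∑' i, w i ^ p * ∫⁻ x, g i x ^ p ∂μ := by
        rw [lintegral_tsum fun i => ((hg i).pow_const p).const_mul _]
        exact tsum_congr fun i => lintegral_const_mul'' _ ((hg i).pow_const p)
    _ ≤ (∑' i, w i ^ p) * B := by
        rw [← ENNReal.tsum_mul_right]
        gcongr with i
        exact hB i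

theorem lintegral_rpow_tsum_mul_le_of_one_lt (hp : 1 < p) (w : ι → ℝ≥0∞)
    (hg : ∀ i, AEMeasurable (g i) μ) (hB : ∀ i, ∫⁻ x, g i x ^ p ∂μ ≤ B) :
    ∫⁻ x, (∑' i, w i * g i x) ^ p ∂μ ≤ (∑' i, w i) ^ p * B :=
  calc ∫⁻ x, (∑' i, w i * g i x) ^ p ∂μ
      ≤ ∫⁻ x, (∑' i, w i) ^ (p - 1) * ∑' i, w i * g i x ^ p ∂μ :=
        lintegral_mono fun x => ENNReal.rpow_tsum_mul_le hp w fun i => g i x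
    _ = (∑' i, w i) ^ (p - 1) * ∑' i, w i * ∫⁻ x, g i x ^ p ∂μ := by
        rw [lintegral_const_mul'' _ (AEMeasurable.tsum fun i =>
            ((hg i).pow_const p).const_mul _),
          lintegral_tsum fun i => ((hg i).pow_const p).const_mul _]
        exact congrArg _ (tsum_congr fun i => lintegral_const_mul'' _ ((hg i).pow_const p))
    _ ≤ (∑' i, w i) ^ (p - 1) * ((∑' i, w i) * B) := by
        rw [← ENNReal.tsum_mul_right]
        gcongr with i
        exact hB i
    _ = (∑' i, w i) ^ p * B := by
        rw [← mul_assoc]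
        congr 1
        conv_rhs => rw [← sub_add_cancel p 1]
        rw [ENNReal.rpow_add_of_nonneg _ _ (sub_nonneg.2 hp.le) zero_le_one, ENNReal.rpow_one]

end WeightedSeries

theorem summable_two_rpow_neg_mul_abs {c : ℝ} (hc : 0 < c) :
    Summable fun j : ℤ => (2 : ℝ) ^ (-c * |(j : ℝ)|) := by
  have hr : (2 : ℝ) ^ (-c) < 1 := Real.rpow_lt_one_of_one_lt_of_neg one_lt_two (neg_neg_of_pos hc)
  have hgeom : Summable fun n : ℕ => ((2 : ℝ) ^ (-c)) ^ n :=
    summable_geometric_of_lt_one (by positivity) hr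
  have hpow : ∀ j : ℤ, (2 : ℝ) ^ (-c * |(j : ℝ)|) = ((2 : ℝ) ^ (-c)) ^ j.natAbs := fun j => by
    rw [← Real.rpow_natCast, ← Real.rpow_mul zero_le_two, Nat.cast_natAbs, Int.cast_abs]
  simp only [hpow]
  exact .of_nat_of_neg (by simpa using hgeom) (by simpa using hgeom)

theorem tsum_two_rpow_neg_mul_abs_pos {c : ℝ} (hc : 0 < c) :
    0 < ∑' j : ℤ, (2 : ℝ) ^ (-c * |(j : ℝ)|) :=
  (summable_two_rpow_neg_mul_abs hc).tsum_pos (fun _ => by positivity) 0 (by positivity)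

theorem tsum_ofReal_two_rpow_neg_mul_abs {c : ℝ} (hc : 0 < c) :
    ∑' j : ℤ, ENNReal.ofReal ((2 : ℝ) ^ (-c * |(j : ℝ)|)) =
      ENNReal.ofReal (∑' j : ℤ, (2 : ℝ) ^ (-c * |(j : ℝ)|)) :=
  (ENNReal.ofReal_tsum_of_nonneg (fun _ => by positivity) (summable_two_rpow_neg_mul_abs hc)).symm

theorem exists_lintegral_rpow_tsum_two_rpow_mul_le {p δ : ℝ} (hp : 0 < p) (hδ : 0 < δ) :
    ∃ C : ℝ, 0 < C ∧ ∀ {α : Type*} [MeasurableSpace α] (μ : Measure α) (g : ℤ → α → ℝ≥0∞),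
      (∀ j, AEMeasurable (g j) μ) → ∀ B : ℝ≥0∞, (∀ j, ∫⁻ x, g j x ^ p ∂μ ≤ B) →
        ∫⁻ x, (∑' j : ℤ, ENNReal.ofReal ((2 : ℝ) ^ (-δ * |(j : ℝ)|)) * g j x) ^ p ∂μ ≤
          ENNReal.ofReal C ^ p * B := by
  rcases le_or_gt p 1 with hp1 | hp1
  · have hpδ : 0 < p * δ := mul_pos hp hδ
    refine ⟨(∑' j : ℤ, (2 : ℝ) ^ (-(p * δ) * |(j : ℝ)|)) ^ (1 / p),
      Real.rpow_pos_of_pos (tsum_two_rpow_neg_mul_abs_pos hpδ) _,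
      fun μ g hg B hB => (lintegral_rpow_tsum_mul_le_of_le_one hp hp1 _ hg hB).trans_eq ?_⟩
    have hw : ∀ j : ℤ, ENNReal.ofReal ((2 : ℝ) ^ (-δ * |(j : ℝ)|)) ^ p =
        ENNReal.ofReal ((2 : ℝ) ^ (-(p * δ) * |(j : ℝ)|)) := fun j => by
      rw [ENNReal.ofReal_rpow_of_nonneg (by positivity) hp.le, ← Real.rpow_mul zero_le_two]
      ring_nf
    rw [tsum_congr hw, tsum_ofReal_two_rpow_neg_mul_abs hpδ,
      ENNReal.ofReal_rpow_of_nonneg (by positivity) hp.le, ← Real.rpow_mul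
        (tsum_two_rpow_neg_mul_abs_pos hpδ).le, one_div_mul_cancel hp.ne', Real.rpow_one]
  · exact ⟨∑' j : ℤ, (2 : ℝ) ^ (-δ * |(j : ℝ)|), tsum_two_rpow_neg_mul_abs_pos hδ,
      fun μ g hg B hB => (lintegral_rpow_tsum_mul_le_of_one_lt hp1 _ hg hB).trans_eq
        (by rw [tsum_ofReal_two_rpow_neg_mul_abs hδ])⟩

theorem setLIntegral_comp_neg_mul_snd {E : Type*} [MeasurableSpace E] (μ : Measure E) [SFinite μ]
    {c : ℝ} (hc : 0 < c) (H : E × ℝ → ℝ≥0∞) :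
    ∫⁻ x in {x : E × ℝ | x.2 < 0}, H (x.1, -c * x.2) ∂μ.prod volume =
      (ENNReal.ofReal c)⁻¹ * ∫⁻ x in {x : E × ℝ | 0 < x.2}, H x ∂μ.prod volume := by
  have hc' : -c ≠ 0 := neg_ne_zero.2 hc.ne'
  let φ : E × ℝ ≃ᵐ E × ℝ := (MeasurableEquiv.refl E).prodCongr (MeasurableEquiv.mulLeft₀ (-c) hc')
  have hφ : MeasurePreserving φ (μ.prod volume) ((ENNReal.ofReal c)⁻¹ • μ.prod volume) := by
    rw [← Measure.prod_smul_right, ← ENNReal.ofReal_inv_of_pos hc, ← abs_of_pos (inv_pos.2 hc),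
      ← abs_neg, ← inv_neg, ← Real.map_volume_mul_left hc']
    exact (MeasurePreserving.id μ).prod ⟨measurable_const_mul _, rfl⟩
  have hφx : ∀ x, φ x = (x.1, -c * x.2) := fun _ => rfl
  have hpre : φ ⁻¹' {x | 0 < x.2} = {x | x.2 < 0} := by
    ext x
    simp only [Set.mem_preimage, Set.mem_ofPred_eq, hφx, neg_mul_comm,
      mul_pos_iff_of_pos_left hc, neg_pos]
  simp only [← hφx]
  rw [← hpre, hφ.setLIntegral_comp_preimage_emb φ.measurableEmbedding, Measure.restrict_smul,
    lintegral_smul_measure, smul_eq_mul]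

theorem setLIntegral_rpow_const_mul_enorm_comp_neg_mul_snd {E X : Type*} [MeasurableSpace E]
    [NormedAddCommGroup X] (μ : Measure E) [SFinite μ] {c κ p : ℝ} (hc : 0 < c) (hκ : 0 ≤ κ)
    (hp : 0 < p) (f : E × ℝ → X) :
    ∫⁻ x in {x : E × ℝ | x.2 < 0}, (ENNReal.ofReal κ * ‖f (x.1, -c * x.2)‖ₑ) ^ p ∂μ.prod volume =
      ENNReal.ofReal (κ * c ^ (-1 / p)) ^ p *
        ∫⁻ x in {x : E × ℝ | 0 < x.2}, ‖f x‖ₑ ^ p ∂μ.prod volume := by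
  have hscale :
      ENNReal.ofReal (κ * c ^ (-1 / p)) ^ p = (ENNReal.ofReal c)⁻¹ * ENNReal.ofReal κ ^ p := by
    rw [ENNReal.ofReal_rpow_of_nonneg (by positivity) hp.le, Real.mul_rpow hκ (by positivity),
      ← Real.rpow_mul hc.le, div_mul_cancel₀ _ hp.ne', Real.rpow_neg_one,
      ENNReal.ofReal_mul (by positivity), ENNReal.ofReal_inv_of_pos hc,
      ← ENNReal.ofReal_rpow_of_nonneg hκ hp.le, mul_comm]
  simp only [ENNReal.mul_rpow_of_nonneg _ _ hp.le]
  rw [setLIntegral_comp_neg_mul_snd μ hc (fun y => ENNReal.ofReal κ ^ p * ‖f y‖ₑ ^ p),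
    lintegral_const_mul' _ _ (ENNReal.rpow_ne_top_of_nonneg hp.le ENNReal.ofReal_ne_top),
    hscale, mul_assoc]

theorem ae_summable_norm_and_lintegral_rpow_norm_tsum_le {α ι X : Type*} [MeasurableSpace α]
    [Countable ι] [NormedAddCommGroup X] {μ : Measure α} {p : ℝ} (hp : 0 < p) {h : ι → α → X}
    (hh : ∀ i, AEMeasurable (fun x => ‖h i x‖ₑ) μ) {M : ℝ≥0∞} (hM : M ≠ ⊤)
    (hle : ∫⁻ x, (∑' i, ‖h i x‖ₑ) ^ p ∂μ ≤ M) :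
    (∀ᵐ x ∂μ, Summable fun i => ‖h i x‖) ∧
      ∫⁻ x, ENNReal.ofReal (‖∑' i, h i x‖ ^ p) ∂μ ≤ M := by
  constructor
  · have hfin : ∀ᵐ x ∂μ, (∑' i, ‖h i x‖ₑ) ^ p < ⊤ :=
      ae_lt_top' ((AEMeasurable.tsum hh).pow_const p) (hle.trans_lt hM.lt_top).ne
    filter_upwards [hfin] with x hx
    exact tsum_enorm_ne_top_iff_summable_norm.1 fun htop => by
      simp [htop, ENNReal.top_rpow_of_pos hp] at hx
  · refine le_trans (lintegral_mono fun x => ?_) hle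
    rw [← ENNReal.ofReal_rpow_of_nonneg (norm_nonneg _) hp.le, ofReal_norm]
    exact ENNReal.rpow_le_rpow enorm_tsum_le_tsum_enorm hp.le

theorem enorm_smul_eq_ofReal_two_rpow_neg_mul_mul {X : Type*} [NormedAddCommGroup X]
    [NormedSpace ℝ X] (c s a : ℝ) (y : X) :
    ‖a • y‖ₑ =
      ENNReal.ofReal ((2 : ℝ) ^ (-c * s)) * (ENNReal.ofReal ((2 : ℝ) ^ (c * s) * |a|) * ‖y‖ₑ) := by
  rw [enorm_smul, Real.enorm_eq_ofReal_abs, ← mul_assoc, ← ENNReal.ofReal_mul (by positivity),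
    ← mul_assoc, ← Real.rpow_add two_pos, neg_mul, neg_add_cancel, Real.rpow_zero, one_mul]

/-- the vector-valued version of Statement 12. For 0 < p < ∞ and δ > 0
there is C = C(p,δ) > 0, independent of the dimension, of the Banach space X and of
the sequences a, b with A := ∑_j 2^{δ|j|}|a_j| b_j^{-1/p} < ∞, such that for every
strongly measurable f : ℝ^n → X with ∫_{xₙ>0} ‖f‖_X^p < ∞, the series
∑_j a_j f(x', -b_j xₙ) converges absolutely in X for a.e. x with xₙ < 0 and
(∫_{xₙ<0} ‖∑_j a_j f(x', -b_j xₙ)‖_X^p)^{1/p} ≤ C·A·(∫_{xₙ>0} ‖f‖_X^p)^{1/p}. -/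
theorem statement13 (p δ : ℝ) (hp : 0 < p) (hδ : 0 < δ) :
    ∃ C : ℝ, 0 < C ∧
      ∀ (m : ℕ) (X : Type) [NormedAddCommGroup X] [NormedSpace ℝ X] [CompleteSpace X],
        ∀ (a b : ℤ → ℝ), (∀ j, 0 < b j) →
        Summable (fun j : ℤ => (2 : ℝ) ^ (δ * |(j : ℝ)|) * |a j| * b j ^ (-1 / p)) →
        ∀ f : (Fin m → ℝ) × ℝ → X, StronglyMeasurable f →
          (∫⁻ x in {x : (Fin m → ℝ) × ℝ | 0 < x.2}, ENNReal.ofReal (‖f x‖ ^ p)) < ⊤ →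
          (∀ᵐ x : (Fin m → ℝ) × ℝ, x.2 < 0 →
            Summable (fun j : ℤ => ‖a j • f (x.1, -(b j) * x.2)‖)) ∧
          (∫⁻ x in {x : (Fin m → ℝ) × ℝ | x.2 < 0},
              ENNReal.ofReal (‖∑' j : ℤ, a j • f (x.1, -(b j) * x.2)‖ ^ p)) ^ (1 / p) ≤
            ENNReal.ofReal
              (C * ∑' j : ℤ, (2 : ℝ) ^ (δ * |(j : ℝ)|) * |a j| * b j ^ (-1 / p)) *
            (∫⁻ x in {x : (Fin m → ℝ) × ℝ | 0 < x.2}, ENNReal.ofReal (‖f x‖ ^ p)) ^ (1 / p) := by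
  obtain ⟨C, hC, hsum_le⟩ := exists_lintegral_rpow_tsum_two_rpow_mul_le hp hδ
  refine ⟨C, hC, fun m X _ _ _ a b hb hA f hf hF => ?_⟩
  set A := ∑' j : ℤ, (2 : ℝ) ^ (δ * |(j : ℝ)|) * |a j| * b j ^ (-1 / p)
  set F := ∫⁻ x in {x : (Fin m → ℝ) × ℝ | 0 < x.2}, ENNReal.ofReal (‖f x‖ ^ p)
  have hf_dil : ∀ j, StronglyMeasurable fun x : (Fin m → ℝ) × ℝ => f (x.1, -b j * x.2) :=
    fun j => hf.comp_measurable (measurable_fst.prodMk (measurable_snd.const_mul _))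
  have hbound : ∫⁻ x in {x : (Fin m → ℝ) × ℝ | x.2 < 0},
      (∑' j, ‖a j • f (x.1, -b j * x.2)‖ₑ) ^ p ≤
        ENNReal.ofReal C ^ p * (ENNReal.ofReal A ^ p * F) := by
    have hsplit : ∀ x : (Fin m → ℝ) × ℝ, ∑' j, ‖a j • f (x.1, -b j * x.2)‖ₑ =
        ∑' j : ℤ, ENNReal.ofReal ((2 : ℝ) ^ (-δ * |(j : ℝ)|)) *
          (ENNReal.ofReal ((2 : ℝ) ^ (δ * |(j : ℝ)|) * |a j|) * ‖f (x.1, -b j * x.2)‖ₑ) :=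
      fun x => tsum_congr fun j => enorm_smul_eq_ofReal_two_rpow_neg_mul_mul δ |(j : ℝ)| _ _
    simp only [hsplit]
    refine hsum_le _ _ (fun j => ((hf_dil j).enorm.const_mul _).aemeasurable) _ fun j => ?_
    rw [Measure.volume_eq_prod, setLIntegral_rpow_const_mul_enorm_comp_neg_mul_snd _ (hb j)
      (by positivity) hp, ← Measure.volume_eq_prod]
    simp only [F, ← ofReal_norm, ENNReal.ofReal_rpow_of_nonneg (norm_nonneg _) hp.le]
    gcongr
    exact hA.le_tsum j fun i _ => mul_nonneg (by positivity) (Real.rpow_nonneg (hb i).le _)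
  obtain ⟨hsummable, hlintegral⟩ := ae_summable_norm_and_lintegral_rpow_norm_tsum_le hp
    (h := fun j (x : (Fin m → ℝ) × ℝ) => a j • f (x.1, -b j * x.2))
    (fun j => (((hf_dil j).const_smul (a j)).enorm).aemeasurable) (by finiteness) hbound
  refine ⟨(ae_restrict_iff' (measurableSet_lt measurable_snd measurable_const)).1 hsummable, ?_⟩
  rw [ENNReal.ofReal_mul hC.le]
  exact ENNReal.rpow_one_div_le_mul_mul_rpow_one_div hp hlintegral
end

section
/- Let n ≥ 1, 0 < s < 1, and let a = (a_j)_{j∈ℤ} ⊂ ℝ and b = (b_j)_{j∈ℤ} ⊂ (0,∞) satisfy ∑_{j∈ℤ} a_j = 1 and A := ∑_{j∈ℤ} |a_j| · max(1, b_j)^s < ∞. If f : ℝ^n → ℝ and C ≥ 0 satisfy |f(x) - f(y)| ≤ C |x - y|^s for all x, y in the closed half-space {x : x_n ≥ 0}, then |E^{a,b}f(x) - E^{a,b}f(y)| ≤ 2C(1 + A) |x - y|^s for all x, y ∈ ℝ^n; i.e. E^{a,b} maps s-Hölder continuous functions on the closed half-space to s-Hölder continuous functions on ℝ^n, with Hölder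 constant enlarged by at most the factor 2(1 + A). -/
/-- The half-space extension `E^{a,b}`: points of ℝ^n are written as pairs
`(x', xₙ) ∈ ℝ^{n-1} × ℝ`; `Eext a b f (x', xₙ) = f (x', xₙ)` for `xₙ ≥ 0` and
`= ∑_{j∈ℤ} a_j f(x', -b_j xₙ)` for `xₙ < 0`. -/
noncomputable def Eext {P : Type*} (a b : ℤ → ℝ) (f : P × ℝ → ℝ) : P × ℝ → ℝ :=
  fun x => if 0 ≤ x.2 then f x else ∑' j : ℤ, a j * f (x.1, -(b j) * x.2)

/-- The Euclidean distance on ℝ^n = ℝ^{n-1} × ℝ, where the first factor carries the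
Euclidean norm. -/
noncomputable def eudist {m : ℕ} (x y : EuclideanSpace ℝ (Fin m) × ℝ) : ℝ :=
  Real.sqrt (dist x.1 y.1 ^ 2 + (x.2 - y.2) ^ 2)

set_option maxHeartbeats 1000000 in
/-- let 0 < s < 1, ∑_j a_j = 1 and A := ∑_j |a_j|·max(1,b_j)^s < ∞
(all b_j > 0). If |f x - f y| ≤ C·|x-y|^s for all x, y in the closed half-space
{xₙ ≥ 0}, then |E^{a,b}f x - E^{a,b}f y| ≤ 2C(1+A)·|x-y|^s for all x, y ∈ ℝ^n,
the distance being Euclidean. -/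
theorem statement15 (m : ℕ) (s : ℝ) (hs0 : 0 < s) (hs1 : s < 1)
    (a b : ℤ → ℝ) (hb : ∀ j, 0 < b j) (ha1 : HasSum a 1)
    (hA : Summable (fun j : ℤ => |a j| * (max 1 (b j)) ^ s))
    (f : EuclideanSpace ℝ (Fin m) × ℝ → ℝ) (C : ℝ) (hC : 0 ≤ C)
    (hf : ∀ x y : EuclideanSpace ℝ (Fin m) × ℝ, 0 ≤ x.2 → 0 ≤ y.2 →
      |f x - f y| ≤ C * eudist x y ^ s) :
    ∀ x y : EuclideanSpace ℝ (Fin m) × ℝ,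
      |Eext a b f x - Eext a b f y| ≤
        2 * C * (1 + ∑' j : ℤ, |a j| * (max 1 (b j)) ^ s) * eudist x y ^ s := by
  have hMpos : ∀ j, (0:ℝ) < max 1 (b j) := fun j => lt_of_lt_of_le one_pos (le_max_left _ _)
  have hM1 : ∀ j, (1:ℝ) ≤ max 1 (b j) ^ s := by
    intro j
    calc (1:ℝ) = 1 ^ s := (Real.one_rpow s).symm
    _ ≤ max 1 (b j) ^ s := Real.rpow_le_rpow zero_le_one (le_max_left _ _) hs0.le
  have hMs0 : ∀ j, (0:ℝ) ≤ max 1 (b j) ^ s := fun j => le_trans zero_le_one (hM1 j)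
  have habs : Summable fun j : ℤ => |a j| := by
    refine hA.of_nonneg_of_le (fun j => abs_nonneg _) (fun j => ?_)
    nlinarith [hM1 j, abs_nonneg (a j)]
  set A := ∑' j : ℤ, |a j| * (max 1 (b j)) ^ s with hAdef
  have hA0 : 0 ≤ A :=
    tsum_nonneg fun j => mul_nonneg (abs_nonneg _) (hMs0 j)
  have hd0 : ∀ u v : EuclideanSpace ℝ (Fin m) × ℝ, 0 ≤ eudist u v :=
    fun u v => Real.sqrt_nonneg _
  have hpair : ∀ (p : EuclideanSpace ℝ (Fin m)) (u v : ℝ), eudist (p, u) (p, v) = |u - v| := by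
    intro p u v
    simp [eudist, Real.sqrt_sq_eq_abs]
  have hsnd : ∀ u v : EuclideanSpace ℝ (Fin m) × ℝ, |u.2 - v.2| ≤ eudist u v := by
    intro u v
    rw [← Real.sqrt_sq_eq_abs]
    apply Real.sqrt_le_sqrt
    nlinarith [sq_nonneg (dist u.1 v.1)]
  have hscale : ∀ (p q : EuclideanSpace ℝ (Fin m)) (t u : ℝ) (j : ℤ),
      eudist (p, -(b j) * t) (q, -(b j) * u) ≤ max 1 (b j) * eudist (p, t) (q, u) := by
    intro p q t u j
    have hM : 0 ≤ max 1 (b j) := (hMpos j).le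
    have h1 : eudist (p, -(b j) * t) (q, -(b j) * u)
        = Real.sqrt (dist p q ^ 2 + (b j) ^ 2 * (t - u) ^ 2) := by
      simp only [eudist]
      congr 1
      ring
    have h2 : dist p q ^ 2 + (b j) ^ 2 * (t - u) ^ 2
        ≤ (max 1 (b j)) ^ 2 * (dist p q ^ 2 + (t - u) ^ 2) := by
      have hb2 : (b j) ^ 2 ≤ (max 1 (b j)) ^ 2 := by
        have h := le_max_right 1 (b j)
        nlinarith [(hb j).le]
      have h12 : (1:ℝ) ≤ (max 1 (b j)) ^ 2 := by nlinarith [le_max_left 1 (b j)]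
      nlinarith [sq_nonneg (dist p q), sq_nonneg (t - u)]
    calc eudist (p, -(b j) * t) (q, -(b j) * u)
        = Real.sqrt (dist p q ^ 2 + (b j) ^ 2 * (t - u) ^ 2) := h1
      _ ≤ Real.sqrt ((max 1 (b j)) ^ 2 * (dist p q ^ 2 + (t - u) ^ 2)) := Real.sqrt_le_sqrt h2
      _ = max 1 (b j) * eudist (p, t) (q, u) := by
          rw [Real.sqrt_mul (sq_nonneg _), Real.sqrt_sq hM]
          rfl
  have key : ∀ (p q : EuclideanSpace ℝ (Fin m)) (t u : ℝ), t ≤ 0 → u ≤ 0 → ∀ j : ℤ,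
      |a j * (f (p, -(b j) * t) - f (q, -(b j) * u))|
        ≤ |a j| * max 1 (b j) ^ s * (C * eudist (p, t) (q, u) ^ s) := by
    intro p q t u ht hu j
    have h1 : 0 ≤ -(b j) * t := by nlinarith [hb j]
    have h2 : 0 ≤ -(b j) * u := by nlinarith [hb j]
    have h3 := hf (p, -(b j) * t) (q, -(b j) * u) h1 h2
    have h4 : eudist (p, -(b j) * t) (q, -(b j) * u) ^ s
        ≤ max 1 (b j) ^ s * eudist (p, t) (q, u) ^ s := by
      calc eudist (p, -(b j) * t) (q, -(b j) * u) ^ s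
          ≤ (max 1 (b j) * eudist (p, t) (q, u)) ^ s :=
            Real.rpow_le_rpow (hd0 _ _) (hscale p q t u j) hs0.le
        _ = max 1 (b j) ^ s * eudist (p, t) (q, u) ^ s :=
            Real.mul_rpow (hMpos j).le (hd0 _ _)
    have h5 : |f (p, -(b j) * t) - f (q, -(b j) * u)|
        ≤ max 1 (b j) ^ s * (C * eudist (p, t) (q, u) ^ s) := by
      calc |f (p, -(b j) * t) - f (q, -(b j) * u)|
          ≤ C * eudist (p, -(b j) * t) (q, -(b j) * u) ^ s := h3
        _ ≤ C * (max 1 (b j) ^ s * eudist (p, t) (q, u) ^ s) :=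
            mul_le_mul_of_nonneg_left h4 hC
        _ = max 1 (b j) ^ s * (C * eudist (p, t) (q, u) ^ s) := by ring
    rw [abs_mul]
    calc |a j| * |f (p, -(b j) * t) - f (q, -(b j) * u)|
        ≤ |a j| * (max 1 (b j) ^ s * (C * eudist (p, t) (q, u) ^ s)) :=
          mul_le_mul_of_nonneg_left h5 (abs_nonneg _)
      _ = |a j| * max 1 (b j) ^ s * (C * eudist (p, t) (q, u) ^ s) := by ring
  have sumf : ∀ (p : EuclideanSpace ℝ (Fin m)) (t : ℝ), t ≤ 0 →
      Summable fun j : ℤ => a j * f (p, -(b j) * t) := by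
    intro p t ht
    have hmaj : Summable fun j : ℤ =>
        |a j| * max 1 (b j) ^ s * (C * eudist (p, t) (p, 0) ^ s) + |a j| * |f (p, 0)| :=
      Summable.add (hA.mul_right _) (habs.mul_right _)
    apply Summable.of_abs
    refine hmaj.of_nonneg_of_le (fun j => abs_nonneg _) (fun j => ?_)
    have h0 : f (p, -(b j) * (0:ℝ)) = f (p, 0) := by norm_num
    have hk := key p p t 0 ht le_rfl j
    rw [h0] at hk
    calc |a j * f (p, -(b j) * t)|
        = |a j * (f (p, -(b j) * t) - f (p, 0)) + a j * f (p, 0)| := by congr 1; ring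
      _ ≤ |a j * (f (p, -(b j) * t) - f (p, 0))| + |a j * f (p, 0)| := abs_add_le _ _
      _ ≤ |a j| * max 1 (b j) ^ s * (C * eudist (p, t) (p, 0) ^ s) + |a j| * |f (p, 0)| := by
          exact add_le_add hk (abs_mul _ _).le
  intro x y
  have hD0 : 0 ≤ eudist x y := hd0 x y
  have hDs : 0 ≤ eudist x y ^ s := Real.rpow_nonneg hD0 s
  have mixed : ∀ u v : EuclideanSpace ℝ (Fin m) × ℝ, 0 ≤ u.2 → v.2 < 0 →
      |Eext a b f u - Eext a b f v| ≤ C * (1 + A) * eudist u v ^ s := by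
    intro u v hu hv
    have hEu : Eext a b f u = f u := if_pos hu
    have hEv : Eext a b f v = ∑' j : ℤ, a j * f (v.1, -(b j) * v.2) := if_neg (not_le.mpr hv)
    have hd0' := hd0 u v
    have hDs' : 0 ≤ eudist u v ^ s := Real.rpow_nonneg hd0' s
    have h1 : |f u - f (v.1, 0)| ≤ C * eudist u v ^ s := by
      refine (hf u (v.1, 0) hu le_rfl).trans
        (mul_le_mul_of_nonneg_left (Real.rpow_le_rpow (hd0 _ _) ?_ hs0.le) hC)
      have he : eudist u (v.1, 0) = Real.sqrt (dist u.1 v.1 ^ 2 + u.2 ^ 2) := by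
        simp [eudist]
      rw [he]
      unfold eudist
      apply Real.sqrt_le_sqrt
      nlinarith
    have hsv : Summable fun j : ℤ => a j * f (v.1, -(b j) * v.2) := sumf v.1 v.2 hv.le
    have hc : HasSum (fun j : ℤ => a j * f (v.1, 0)) (f (v.1, 0)) := by
      simpa using ha1.mul_right (f (v.1, 0))
    have hterm : ∀ j : ℤ, |a j * f (v.1, 0) - a j * f (v.1, -(b j) * v.2)|
        ≤ |a j| * max 1 (b j) ^ s * (C * eudist u v ^ s) := by
      intro j
      have hk := key v.1 v.1 0 v.2 le_rfl hv.le j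
      have h0 : f (v.1, -(b j) * (0:ℝ)) = f (v.1, 0) := by norm_num
      rw [h0, hpair] at hk
      have hle : |(0:ℝ) - v.2| ^ s ≤ eudist u v ^ s := by
        apply Real.rpow_le_rpow (abs_nonneg _) ?_ hs0.le
        have h5 := hsnd u v
        have e1 : |(0:ℝ) - v.2| = -v.2 := by rw [zero_sub, abs_neg, abs_of_neg hv]
        have e2 : |u.2 - v.2| = u.2 - v.2 := abs_of_nonneg (by linarith)
        linarith
      calc |a j * f (v.1, 0) - a j * f (v.1, -(b j) * v.2)|
          = |a j * (f (v.1, 0) - f (v.1, -(b j) * v.2))| := by rw [mul_sub]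
        _ ≤ |a j| * max 1 (b j) ^ s * (C * |(0:ℝ) - v.2| ^ s) := hk
        _ ≤ |a j| * max 1 (b j) ^ s * (C * eudist u v ^ s) := by
            exact mul_le_mul_of_nonneg_left (mul_le_mul_of_nonneg_left hle hC)
              (mul_nonneg (abs_nonneg _) (hMs0 j))
    have hgsum : Summable fun j : ℤ => |a j * f (v.1, 0) - a j * f (v.1, -(b j) * v.2)| :=
      (hA.mul_right (C * eudist u v ^ s)).of_nonneg_of_le (fun j => abs_nonneg _) hterm
    have h3 : |f (v.1, 0) - ∑' j : ℤ, a j * f (v.1, -(b j) * v.2)|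
        ≤ A * (C * eudist u v ^ s) := by
      have heq : f (v.1, 0) - (∑' j : ℤ, a j * f (v.1, -(b j) * v.2))
          = ∑' j : ℤ, (a j * f (v.1, 0) - a j * f (v.1, -(b j) * v.2)) := by
        rw [Summable.tsum_sub hc.summable hsv, hc.tsum_eq]
      rw [heq]
      calc |∑' j : ℤ, (a j * f (v.1, 0) - a j * f (v.1, -(b j) * v.2))|
          ≤ ∑' j : ℤ, |a j * f (v.1, 0) - a j * f (v.1, -(b j) * v.2)| := by
            have hg' : Summable fun j : ℤ =>
                ‖a j * f (v.1, 0) - a j * f (v.1, -(b j) * v.2)‖ := by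
              simpa [Real.norm_eq_abs] using hgsum
            simpa [Real.norm_eq_abs] using norm_tsum_le_tsum_norm hg'
        _ ≤ ∑' j : ℤ, |a j| * max 1 (b j) ^ s * (C * eudist u v ^ s) :=
            Summable.tsum_le_tsum hterm hgsum (hA.mul_right _)
        _ = A * (C * eudist u v ^ s) := tsum_mul_right
    rw [hEu, hEv]
    calc |f u - ∑' j : ℤ, a j * f (v.1, -(b j) * v.2)|
        = |(f u - f (v.1, 0)) + (f (v.1, 0) - ∑' j : ℤ, a j * f (v.1, -(b j) * v.2))| := by
          congr 1; ring
      _ ≤ |f u - f (v.1, 0)| + |f (v.1, 0) - ∑' j : ℤ, a j * f (v.1, -(b j) * v.2)| :=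
          abs_add_le _ _
      _ ≤ C * eudist u v ^ s + A * (C * eudist u v ^ s) := add_le_add h1 h3
      _ = C * (1 + A) * eudist u v ^ s := by ring
  rcases le_or_gt 0 x.2 with hx | hx
  · rcases le_or_gt 0 y.2 with hy | hy
    · -- both nonneg
      have hEx : Eext a b f x = f x := if_pos hx
      have hEy : Eext a b f y = f y := if_pos hy
      rw [hEx, hEy]
      have := hf x y hx hy
      nlinarith [mul_nonneg (mul_nonneg hC hDs) hA0, mul_nonneg hC hDs]
    · -- x nonneg, y neg
      have := mixed x y hx hy
      nlinarith [mul_nonneg (mul_nonneg hC (by linarith : (0:ℝ) ≤ 1 + A)) hDs]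
  · rcases le_or_gt 0 y.2 with hy | hy
    · -- x neg, y nonneg
      have hcomm : eudist y x = eudist x y := by
        simp only [eudist, dist_comm]
        congr 1
        ring
      have := mixed y x hy hx
      rw [hcomm] at this
      rw [abs_sub_comm]
      nlinarith [mul_nonneg (mul_nonneg hC (by linarith : (0:ℝ) ≤ 1 + A)) hDs]
    · -- both neg
      have hEx : Eext a b f x = ∑' j : ℤ, a j * f (x.1, -(b j) * x.2) := if_neg (not_le.mpr hx)
      have hEy : Eext a b f y = ∑' j : ℤ, a j * f (y.1, -(b j) * y.2) := if_neg (not_le.mpr hy)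
      have hsx := sumf x.1 x.2 hx.le
      have hsy := sumf y.1 y.2 hy.le
      have hterm : ∀ j : ℤ, |a j * f (x.1, -(b j) * x.2) - a j * f (y.1, -(b j) * y.2)|
          ≤ |a j| * max 1 (b j) ^ s * (C * eudist x y ^ s) := by
        intro j
        have hk := key x.1 y.1 x.2 y.2 hx.le hy.le j
        simp only [Prod.mk.eta] at hk
        calc |a j * f (x.1, -(b j) * x.2) - a j * f (y.1, -(b j) * y.2)|
            = |a j * (f (x.1, -(b j) * x.2) - f (y.1, -(b j) * y.2))| := by rw [mul_sub]
          _ ≤ |a j| * max 1 (b j) ^ s * (C * eudist x y ^ s) := hk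
      have hgsum : Summable fun j : ℤ =>
          |a j * f (x.1, -(b j) * x.2) - a j * f (y.1, -(b j) * y.2)| :=
        (hA.mul_right (C * eudist x y ^ s)).of_nonneg_of_le (fun j => abs_nonneg _) hterm
      rw [hEx, hEy, ← Summable.tsum_sub hsx hsy]
      have hbound : |∑' j : ℤ, (a j * f (x.1, -(b j) * x.2) - a j * f (y.1, -(b j) * y.2))|
          ≤ A * (C * eudist x y ^ s) := by
        calc |∑' j : ℤ, (a j * f (x.1, -(b j) * x.2) - a j * f (y.1, -(b j) * y.2))|
            ≤ ∑' j : ℤ, |a j * f (x.1, -(b j) * x.2) - a j * f (y.1, -(b j) * y.2)| := by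
              have hg' : Summable fun j : ℤ =>
                  ‖a j * f (x.1, -(b j) * x.2) - a j * f (y.1, -(b j) * y.2)‖ := by
                simpa [Real.norm_eq_abs] using hgsum
              simpa [Real.norm_eq_abs] using norm_tsum_le_tsum_norm hg'
          _ ≤ ∑' j : ℤ, |a j| * max 1 (b j) ^ s * (C * eudist x y ^ s) :=
              Summable.tsum_le_tsum hterm hgsum (hA.mul_right _)
          _ = A * (C * eudist x y ^ s) := tsum_mul_right
      nlinarith [mul_nonneg hC hDs, mul_nonneg (mul_nonneg hC hDs) hA0]
end

section
/- Let n ≥ 1 and let a = (a_j)_{j∈ℤ} ⊂ ℝ and b = (b_j)_{j∈ℤ} ⊂ (0,∞) satisfy ∑_{j∈ℤ} |a_j| b_j^k < ∞ for every integer k ≥ 0 and ∑_{j∈ℤ} a_j (-b_j)^k = 1 for every integer k ≥ 0. Then for every f : ℝ^n → ℝ that is C^∞ with all partial derivatives of every order bounded on ℝ^n, the function E^{a,b}f is C^∞ on all of ℝ^n. -/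
/-!
Where `xₙ ≠ 0`, `Eext a b f` coincides near `x` with `f` or with the series
`g x = ∑ⱼ aⱼ f (x', -bⱼ xₙ)`. Both are smooth on the whole space: the `k`-th derivative of the
`j`-th term of `g` is bounded by `Mₖ |aⱼ| max(1, bⱼ)ᵏ`, which is summable, so `g` can be
differentiated termwise. On `xₙ = 0` the `k`-th derivative of `g` is `∑ⱼ aⱼ Dᵏf(x)` applied to
vectors whose last coordinates are scaled by `-bⱼ`; expanding multilinearly, the term in which `m`
last coordinates occur gets the coefficient `∑ⱼ aⱼ (-bⱼ)ᵐ = 1`, so all derivatives of `f` and `g` agree there. Two smooth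
functions glued along a hyperplane on which all their derivatives agree give a smooth function,
whose derivatives are the glued derivatives.
-/

open scoped ContDiff

section Gluing

variable {E F : Type*} [NormedAddCommGroup E] [NormedSpace ℝ E]
  [NormedAddCommGroup F] [NormedSpace ℝ F]

theorem hasFDerivAt_ite_snd_nonneg {f g : E × ℝ → F} {f' g' : E × ℝ →L[ℝ] F} {x : E × ℝ}
    (hf : HasFDerivAt f f' x) (hg : HasFDerivAt g g' x) (h : x.2 = 0 → f x = g x ∧ f' = g') :
    HasFDerivAt (fun y => if 0 ≤ y.2 then f y else g y) (if 0 ≤ x.2 then f' else g') x := by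
  rcases lt_trichotomy x.2 0 with hx | hx | hx
  · rw [if_neg hx.not_ge]
    refine hg.congr_of_eventuallyEq ?_
    filter_upwards [(isOpen_lt continuous_snd continuous_const).mem_nhds hx] with y hy
    exact if_neg (not_le.2 hy)
  · obtain ⟨hfg, rfl⟩ := h hx
    rw [if_pos hx.ge, ← hasFDerivWithinAt_univ,
      ← Set.union_compl_self {y : E × ℝ | 0 ≤ y.2}]
    refine HasFDerivWithinAt.union ?_ ?_
    · exact hf.hasFDerivWithinAt.congr (fun y hy => if_pos hy) (if_pos hx.ge)
    · exact hg.hasFDerivWithinAt.congr (fun y hy => if_neg hy) (by rw [if_pos hx.ge, hfg])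
  · rw [if_pos hx.le]
    refine hf.congr_of_eventuallyEq ?_
    filter_upwards [(isOpen_lt continuous_const continuous_snd).mem_nhds hx] with y hy
    exact if_pos hy.le

variable {n : ℕ∞} {f g : E × ℝ → F} (hf : ContDiff ℝ n f) (hg : ContDiff ℝ n g)
  (h : ∀ k : ℕ, k ≤ n → ∀ p : E × ℝ, p.2 = 0 → iteratedFDeriv ℝ k f p = iteratedFDeriv ℝ k g p)
include hf hg h

theorem hasFDerivAt_ite_iteratedFDeriv {m : ℕ} (hm : m < n) (x : E × ℝ) :
    HasFDerivAt (fun y => if 0 ≤ y.2 then iteratedFDeriv ℝ m f y else iteratedFDeriv ℝ m g y)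
      (if 0 ≤ x.2 then fderiv ℝ (iteratedFDeriv ℝ m f) x
        else fderiv ℝ (iteratedFDeriv ℝ m g) x) x := by
  refine hasFDerivAt_ite_snd_nonneg
    (hf.differentiable_iteratedFDeriv (mod_cast hm) x).hasFDerivAt
    (hg.differentiable_iteratedFDeriv (mod_cast hm) x).hasFDerivAt fun hx => ⟨h m hm.le x hx, ?_⟩
  have := h (m + 1) (Order.add_one_le_of_lt hm) x hx
  rw [iteratedFDeriv_succ_eq_comp_left, iteratedFDeriv_succ_eq_comp_left, Function.comp_apply,
    Function.comp_apply] at this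
  exact LinearIsometryEquiv.injective _ this

theorem iteratedFDeriv_ite_snd_nonneg {m : ℕ} (hm : m ≤ n) :
    iteratedFDeriv ℝ m (fun x => if 0 ≤ x.2 then f x else g x) =
      fun x => if 0 ≤ x.2 then iteratedFDeriv ℝ m f x else iteratedFDeriv ℝ m g x := by
  induction m with
  | zero =>
    ext x : 1
    split_ifs <;> ext v <;> simp [*]
  | succ m ih =>
    have hmn : (m : ℕ∞) < n := ENat.natCast_add_one_le_iff.1 hm
    ext1 x
    rw [iteratedFDeriv_succ_eq_comp_left, Function.comp_apply, ih hmn.le,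
      (hasFDerivAt_ite_iteratedFDeriv hf hg h hmn x).fderiv]
    split_ifs <;> rfl

theorem contDiff_ite_snd_nonneg : ContDiff ℝ n (fun x => if 0 ≤ x.2 then f x else g x) := by
  refine contDiff_iff_continuous_differentiable.2 ⟨fun m hm => ?_, fun m hm => ?_⟩
  · rw [iteratedFDeriv_ite_snd_nonneg hf hg h hm]
    exact (hf.continuous_iteratedFDeriv (mod_cast hm)).if_le
      (hg.continuous_iteratedFDeriv (mod_cast hm)) continuous_const continuous_snd
      fun p hp => h m hm p hp.symm
  · rw [iteratedFDeriv_ite_snd_nonneg hf hg h hm.le]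
    exact fun x => (hasFDerivAt_ite_iteratedFDeriv hf hg h hm x).differentiableAt

end Gluing

theorem MultilinearMap.hasSum_smul_map_add_smul {ι κ E F : Type*} [Fintype ι] [DecidableEq ι]
    [AddCommGroup E] [Module ℝ E] [AddCommGroup F] [Module ℝ F] [TopologicalSpace F]
    [IsTopologicalAddGroup F] [ContinuousSMul ℝ F]
    (T : MultilinearMap ℝ (fun _ : ι => E) F) {a c : κ → ℝ}
    (hmom : ∀ k : ℕ, HasSum (fun j => a j * c j ^ k) 1) (x y : ι → E) :
    HasSum (fun j => a j • T (x + c j • y)) (T (x + y)) := by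
  have expand : ∀ t : ℝ, T (x + t • y) = ∑ s : Finset ι, t ^ s.card • T (s.piecewise y x) := by
    intro t
    rw [add_comm, T.map_add_univ]
    refine Finset.sum_congr rfl fun s _ => ?_
    rw [← Finset.prod_const, ← T.map_piecewise_smul]
    congr 1
    ext i
    by_cases hi : i ∈ s <;> simp [hi]
  convert hasSum_sum (s := (Finset.univ : Finset (Finset ι))) fun s _ =>
    (hmom s.card).smul_const (T (s.piecewise y x)) using 1
  · ext j
    simp only [expand, Finset.smul_sum, smul_smul]
  · simpa using expand 1

section ScaleSnd

variable (P : Type*) [NormedAddCommGroup P] [NormedSpace ℝ P]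

noncomputable def scaleSnd (c : ℝ) : P × ℝ →L[ℝ] P × ℝ :=
  (ContinuousLinearMap.id ℝ P).prodMap (c • ContinuousLinearMap.id ℝ ℝ)

variable {P}

@[simp]
theorem scaleSnd_apply (c : ℝ) (x : P × ℝ) : scaleSnd P c x = (x.1, c * x.2) := rfl

theorem scaleSnd_apply_eq_add_smul (c : ℝ) (x : P × ℝ) :
    scaleSnd P c x = (x.1, 0) + c • (0, x.2) := by
  simp

theorem norm_scaleSnd_le (c : ℝ) : ‖scaleSnd P c‖ ≤ max 1 |c| := by
  refine ContinuousLinearMap.opNorm_le_bound _ (by positivity) fun x => ?_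
  rw [scaleSnd_apply, Prod.norm_def, Prod.norm_def, norm_mul, Real.norm_eq_abs]
  exact max_le ((le_max_left _ _).trans (le_mul_of_one_le_left (norm_nonneg x) (le_max_left _ _)))
    (mul_le_mul (le_max_right _ _) (le_max_right _ _) (norm_nonneg _) (by positivity))

end ScaleSnd

theorem iteratedFDeriv_const_smul_comp_clm {E G F : Type*} [NormedAddCommGroup E]
    [NormedSpace ℝ E] [NormedAddCommGroup G] [NormedSpace ℝ G] [NormedAddCommGroup F]
    [NormedSpace ℝ F] {f : E → F} (hf : ContDiff ℝ ∞ f) (a : ℝ) (L : G →L[ℝ] E) (k : ℕ) (x : G) :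
    iteratedFDeriv ℝ k (fun y => a • f (L y)) x =
      a • (iteratedFDeriv ℝ k f (L x)).compContinuousLinearMap fun _ => L :=
  (iteratedFDeriv_const_smul_apply ((hf.comp L.contDiff).contDiffAt.of_le (mod_cast le_top))).trans
    (congrArg (a • ·) (L.iteratedFDeriv_comp_right hf x (mod_cast le_top)))

section ReflectedSeries

variable {ι P F : Type*} [NormedAddCommGroup P] [NormedSpace ℝ P] [NormedAddCommGroup F]
  [NormedSpace ℝ F] {a c : ι → ℝ} {f : P × ℝ → F} {M : ℕ → ℝ}

theorem summable_abs_mul_max_one_pow (hsum : ∀ k : ℕ, Summable fun j => |a j| * |c j| ^ k)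
    (k : ℕ) : Summable fun j => |a j| * max 1 |c j| ^ k := by
  refine Summable.of_nonneg_of_le (fun j => by positivity) (fun j => ?_)
    ((hsum 0).add (hsum k))
  rw [pow_zero, mul_one, ← mul_one_add]
  gcongr
  rcases le_total 1 |c j| with h | h
  · rw [max_eq_right h]; linarith [zero_le_one' ℝ]
  · rw [max_eq_left h, one_pow]; linarith [pow_nonneg (abs_nonneg (c j)) k]

theorem norm_iteratedFDeriv_smul_comp_scaleSnd_le (hf : ContDiff ℝ ∞ f)
    (hM : ∀ k x, ‖iteratedFDeriv ℝ k f x‖ ≤ M k) (a c : ℝ) (k : ℕ) (x : P × ℝ) :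
    ‖iteratedFDeriv ℝ k (fun y => a • f (scaleSnd P c y)) x‖ ≤ M k * (|a| * max 1 |c| ^ k) := by
  rw [iteratedFDeriv_const_smul_comp_clm hf, norm_smul, Real.norm_eq_abs, mul_left_comm]
  gcongr
  refine ((iteratedFDeriv ℝ k f _).norm_compContinuousLinearMap_le _).trans ?_
  rw [Finset.prod_const, Finset.card_univ, Fintype.card_fin]
  exact mul_le_mul (hM k _) (pow_le_pow_left₀ (norm_nonneg _) (norm_scaleSnd_le c) k)
    (by positivity) ((norm_nonneg _).trans (hM k x))

variable [CompleteSpace F] (hf : ContDiff ℝ ∞ f) (hM : ∀ k x, ‖iteratedFDeriv ℝ k f x‖ ≤ M k)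
  (hsum : ∀ k : ℕ, Summable fun j => |a j| * |c j| ^ k)
include hf hM hsum

theorem contDiff_tsum_smul_comp_scaleSnd :
    ContDiff ℝ ∞ fun x => ∑' j, a j • f (scaleSnd P (c j) x) :=
  contDiff_tsum (fun j => contDiff_const.smul (hf.comp (scaleSnd P (c j)).contDiff))
    (fun k _ => (summable_abs_mul_max_one_pow hsum k).mul_left (M k))
    fun k j x _ => norm_iteratedFDeriv_smul_comp_scaleSnd_le hf hM (a j) (c j) k x

theorem iteratedFDeriv_tsum_smul_comp_scaleSnd_of_snd_eq_zero
    (hmom : ∀ k : ℕ, HasSum (fun j => a j * c j ^ k) 1) (k : ℕ) {p : P × ℝ} (hp : p.2 = 0) :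
    iteratedFDeriv ℝ k (fun x => ∑' j, a j • f (scaleSnd P (c j) x)) p =
      iteratedFDeriv ℝ k f p := by
  have hsummable : Summable fun j => iteratedFDeriv ℝ k (fun y => a j • f (scaleSnd P (c j) y)) p :=
    Summable.of_norm_bounded ((summable_abs_mul_max_one_pow hsum k).mul_left (M k))
      fun j => norm_iteratedFDeriv_smul_comp_scaleSnd_le hf hM (a j) (c j) k p
  rw [iteratedFDeriv_tsum_apply (f := fun j y => a j • f (scaleSnd P (c j) y))
    (fun j => contDiff_const.smul (hf.comp (scaleSnd P (c j)).contDiff))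
    (fun k _ => (summable_abs_mul_max_one_pow hsum k).mul_left (M k))
    (fun k j x _ => norm_iteratedFDeriv_smul_comp_scaleSnd_le hf hM (a j) (c j) k x) le_top p]
  ext v
  rw [ContinuousMultilinearMap.tsum_eval hsummable]
  refine HasSum.tsum_eq ?_
  have hp' : ∀ c : ℝ, scaleSnd P c p = p := fun c => Prod.ext rfl (by simp [hp])
  -- Split `v` into its `P`- and `ℝ`-components; `scaleSnd` fixes `p` and scales only the latter.
  let x : Fin k → P × ℝ := fun i => ((v i).1, 0)
  let y : Fin k → P × ℝ := fun i => (0, (v i).2)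
  have hterm : ∀ j, iteratedFDeriv ℝ k (fun y => a j • f (scaleSnd P (c j) y)) p v =
      a j • iteratedFDeriv ℝ k f p (x + c j • y) := by
    intro j
    rw [iteratedFDeriv_const_smul_comp_clm hf, hp', smul_apply,
      ContinuousMultilinearMap.compContinuousLinearMap_apply]
    congr 2
    funext i
    exact scaleSnd_apply_eq_add_smul (c j) (v i)
  simp only [hterm]
  have hxy : x + y = v := funext fun i => by simp [x, y]
  have := (iteratedFDeriv ℝ k f p).toMultilinearMap.hasSum_smul_map_add_smul hmom x y
  rwa [hxy] at this

end ReflectedSeries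

/-- if ∑_j |a_j| b_j^k < ∞ and ∑_j a_j(-b_j)^k = 1 for every integer
k ≥ 0 (b_j > 0), then for every C^∞ function f all of whose derivatives of every
order are bounded on ℝ^n, the extension E^{a,b}f is C^∞ on all of ℝ^n. -/
theorem statement17 (m : ℕ) (a b : ℤ → ℝ) (hb : ∀ j, 0 < b j)
    (hsum : ∀ k : ℕ, Summable (fun j : ℤ => |a j| * b j ^ k))
    (hmom : ∀ k : ℕ, HasSum (fun j : ℤ => a j * (-(b j)) ^ k) 1)
    (f : (Fin m → ℝ) × ℝ → ℝ) (hf : ContDiff ℝ (⊤ : ℕ∞) f)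
    (hfb : ∀ i : ℕ, ∃ M : ℝ, ∀ x : (Fin m → ℝ) × ℝ, ‖iteratedFDeriv ℝ i f x‖ ≤ M) :
    ContDiff ℝ (⊤ : ℕ∞) (Eext a b f) := by
  choose M hM using hfb
  have hsum' : ∀ k : ℕ, Summable fun j => |a j| * |-(b j)| ^ k := fun k => by
    simpa only [abs_neg, fun j => abs_of_pos (hb j)] using hsum k
  have hseries := contDiff_tsum_smul_comp_scaleSnd hf hM hsum'
  show ContDiff ℝ ∞ fun x => if 0 ≤ x.2 then f x else ∑' j, a j • f (scaleSnd _ (-(b j)) x)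
  exact contDiff_ite_snd_nonneg hf hseries fun k _ p hp =>
    (iteratedFDeriv_tsum_smul_comp_scaleSnd_of_snd_eq_zero hf hM hsum' hmom k hp).symm
end

section
/- Let n ≥ 1 and let a = (a_j)_{j∈ℤ} ⊂ ℝ and b = (b_j)_{j∈ℤ} ⊂ (0,∞) satisfy ∑_{j∈ℤ} |a_j| b_j^m < ∞ for every m ∈ ℤ and ∑_{j∈ℤ} a_j (-b_j)^{-k} = 1 for every integer k ≥ 1. For a Schwartz function g on ℝ^n, define E*g : ℝ^n → ℝ by E*g(x', x_n) := g(x', x_n) - ∑_{j∈ℤ} (a_j/(-b_j)) g(x', -x_n/b_j) for x_n > 0, and E*g(x', x_n) := 0 for x_n ≤ 0. Then E*g is a Schwartz function on ℝ^n with support contained in {x : x_n ≥ 0}, and for all multi-indices α, β ∈ ℕ^n there is a constant C = C(n, a, b, α, β), independent of g, such that sup_{x∈ℝ^n} |x^α ∂^β(E*g)(x)| ≤ C · sup_{y∈ℝ^n} |y^α ∂^β g(y)|. -/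
/-!
Write `E*g = 1_{xₙ > 0} · (g - Tg)` with `Tg(x', xₙ) = ∑ⱼ cⱼ g(x', tⱼ xₙ)`, `cⱼ = aⱼ / (-bⱼ)`,
`tⱼ = -1 / bⱼ`. Since `∑ⱼ |aⱼ| bⱼ^k < ∞` for all `k`, the differentiated series converge
uniformly, so `Tg` is smooth and can be differentiated termwise; `∂^β` of the `j`-th term is
`cⱼ tⱼ^{βₙ} (∂^β g)(x', tⱼ xₙ)`. On the hyperplane `xₙ = 0` every map `(x', xₙ) ↦ (x', tⱼ xₙ)`
fixes the point, so the moment conditions `∑ⱼ cⱼ tⱼ^p = 1` make all derivatives of `g - Tg`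
vanish there, and cutting `g - Tg` off at `xₙ = 0` keeps it smooth. Finally
`x^α = tⱼ^{-αₙ} (x', tⱼ xₙ)^α`, so the `j`-th term of `x^α ∂^β Tg` is bounded by
`|aⱼ| bⱼ^{αₙ-βₙ-1}` times the seminorm of `g`, giving `C = 1 + ∑ⱼ |aⱼ| bⱼ^{αₙ-βₙ-1}`.
-/

open scoped ContDiff

/-- Directional (partial) derivative in the direction `v`. -/
noncomputable def pd {E : Type*} [NormedAddCommGroup E] [NormedSpace ℝ E]
    (v : E) (f : E → ℝ) : E → ℝ :=
  fun x => fderiv ℝ f x v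

/-- The `i`-th standard basis vector of ℝ^n = ℝ^{n-1} × ℝ (the last one being the
`xₙ` direction). -/
noncomputable def basisVec (m : ℕ) (i : Fin (m + 1)) : (Fin m → ℝ) × ℝ :=
  if h : (i : ℕ) < m then (Pi.single ⟨(i : ℕ), h⟩ 1, 0) else (0, 1)

/-- The iterated partial derivative `∂^β` associated with a multi-index
`β : Fin (m+1) → ℕ` (the last component `β (Fin.last m)` is `βₙ`). -/
noncomputable def multiPD {m : ℕ} (γ : Fin (m + 1) → ℕ)
    (f : (Fin m → ℝ) × ℝ → ℝ) : (Fin m → ℝ) × ℝ → ℝ :=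
  ((List.ofFn (fun i : Fin (m + 1) => (pd (basisVec m i))^[γ i])).foldr (· ∘ ·) id) f

/-- The monomial `x^α = x₁^{α₁} ⋯ xₙ^{αₙ}` on ℝ^n = ℝ^{n-1} × ℝ. -/
def mono {m : ℕ} (α : Fin (m + 1) → ℕ) (x : (Fin m → ℝ) × ℝ) : ℝ :=
  (∏ i : Fin m, x.1 i ^ α i.castSucc) * x.2 ^ α (Fin.last m)

/-- A Schwartz function on ℝ^n = ℝ^{n-1} × ℝ: C^∞ with all seminorms
`sup_x |x^α ∂^β g(x)|` finite. -/
def IsSchwartzFn {m : ℕ} (g : (Fin m → ℝ) × ℝ → ℝ) : Prop :=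
  ContDiff ℝ (⊤ : ℕ∞) g ∧
  ∀ α β : Fin (m + 1) → ℕ, ∃ M : ℝ, ∀ x : (Fin m → ℝ) × ℝ, |mono α x * multiPD β g x| ≤ M

/-- The adjoint extension operator `E*`:
`E*g(x', xₙ) = g(x', xₙ) - ∑_j (a_j/(-b_j)) g(x', -xₙ/b_j)` for `xₙ > 0`, and `0`
for `xₙ ≤ 0`. -/
noncomputable def Eadj {m : ℕ} (a b : ℤ → ℝ) (g : (Fin m → ℝ) × ℝ → ℝ) :
    (Fin m → ℝ) × ℝ → ℝ :=
  fun x => if 0 < x.2 then g x - ∑' j : ℤ, a j / (-(b j)) * g (x.1, -x.2 / b j) else 0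

section DirectionalDerivatives

variable {E : Type*} [NormedAddCommGroup E] [NormedSpace ℝ E]

noncomputable def pdList (l : List E) (f : E → ℝ) : E → ℝ :=
  l.foldr pd f

@[simp] lemma pdList_nil (f : E → ℝ) : pdList [] f = f := rfl

@[simp] lemma pdList_cons (v : E) (l : List E) (f : E → ℝ) :
    pdList (v :: l) f = pd v (pdList l f) := rfl

lemma pdList_append (l₁ l₂ : List E) (f : E → ℝ) :
    pdList (l₁ ++ l₂) f = pdList l₁ (pdList l₂ f) := by
  simp [pdList, List.foldr_append]

lemma iterate_pd (v : E) (n : ℕ) : (pd v)^[n] = pdList (List.replicate n v) := by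
  funext f
  induction n with
  | zero => rfl
  | succ n ih => rw [Function.iterate_succ_apply', ih, List.replicate_succ, pdList_cons]

lemma contDiff_pd {f : E → ℝ} (hf : ContDiff ℝ ∞ f) (v : E) : ContDiff ℝ ∞ (pd v f) :=
  (hf.fderiv_right (by simp)).clm_apply contDiff_const

lemma contDiff_pdList {f : E → ℝ} (hf : ContDiff ℝ ∞ f) (l : List E) :
    ContDiff ℝ ∞ (pdList l f) := by
  induction l with
  | nil => exact hf
  | cons v l ih => exact contDiff_pd ih v

lemma pd_pd_comm {f : E → ℝ} (hf : ContDiff ℝ ∞ f) (v w : E) :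
    pd v (pd w f) = pd w (pd v f) := by
  have hpd : ∀ u z x, pd z (pd u f) x = fderiv ℝ (fderiv ℝ f) x z u := fun u z x => by
    change fderiv ℝ (fun y => fderiv ℝ f y u) x z = _
    simp [fderiv_clm_apply ((hf.fderiv_right (m := 1) (by decide)).differentiable (by simp) x)
      (differentiableAt_const u)]
  funext x
  rw [hpd, hpd]
  exact hf.contDiffAt.isSymmSndFDerivAt (by simp; decide) v w

lemma pdList_perm {l₁ l₂ : List E} (h : l₁.Perm l₂) {f : E → ℝ} (hf : ContDiff ℝ ∞ f) :
    pdList l₁ f = pdList l₂ f := by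
  induction h generalizing f with
  | nil => rfl
  | cons v _ ih => simp [ih hf]
  | swap v w l => exact pd_pd_comm (contDiff_pdList hf l) w v
  | trans _ _ ih₁ ih₂ => rw [ih₁ hf, ih₂ hf]

lemma iteratedFDeriv_apply_eq_pdList {f : E → ℝ} (hf : ContDiff ℝ ∞ f) {n : ℕ}
    (v : Fin n → E) (x : E) : iteratedFDeriv ℝ n f x v = pdList (List.ofFn v) f x := by
  induction n generalizing x with
  | zero => simp
  | succ n ih =>
    rw [iteratedFDeriv_succ_apply_left, ← fderiv_continuousMultilinear_apply_const_apply
      ((hf.differentiable_iteratedFDeriv (mod_cast ENat.natCast_lt_top n)) x),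
      List.ofFn_succ, pdList_cons]
    simp only [pd, ih]
    rfl

end DirectionalDerivatives

section Coordinates

variable {m : ℕ}

noncomputable def coord (i : Fin (m + 1)) (w : (Fin m → ℝ) × ℝ) : ℝ :=
  if h : (i : ℕ) < m then w.1 ⟨i, h⟩ else w.2

lemma sum_coord_smul_basisVec (w : (Fin m → ℝ) × ℝ) :
    ∑ i : Fin (m + 1), coord i w • basisVec m i = w := by
  ext j
  · simp [Fin.sum_univ_castSucc, coord, basisVec, Prod.fst_sum, Finset.sum_apply, Pi.single_apply]
  · simp [Fin.sum_univ_castSucc, coord, basisVec, Prod.snd_sum]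

lemma abs_coord_le (i : Fin (m + 1)) (w : (Fin m → ℝ) × ℝ) : |coord i w| ≤ ‖w‖ := by
  unfold coord
  split_ifs
  · exact (norm_le_pi_norm w.1 _).trans (norm_fst_le w)
  · exact norm_snd_le w

variable {V : Type*} [NormedAddCommGroup V] [NormedSpace ℝ V] {k : ℕ}

lemma ContinuousMultilinearMap.apply_eq_sum_basisVec
    (M : ContinuousMultilinearMap ℝ (fun _ : Fin k => (Fin m → ℝ) × ℝ) V)
    (v : Fin k → (Fin m → ℝ) × ℝ) :
    M v = ∑ r : Fin k → Fin (m + 1), (∏ i, coord (r i) (v i)) • M (fun i => basisVec m (r i)) := by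
  conv_lhs => rw [← funext fun i => sum_coord_smul_basisVec (v i)]
  rw [M.map_sum]
  exact Finset.sum_congr rfl fun r _ => M.map_smul_univ _ _

lemma ContinuousMultilinearMap.ext_basisVec
    {M M' : ContinuousMultilinearMap ℝ (fun _ : Fin k => (Fin m → ℝ) × ℝ) V}
    (h : ∀ r : Fin k → Fin (m + 1),
      M (fun i => basisVec m (r i)) = M' (fun i => basisVec m (r i))) :
    M = M' := by
  ext v
  simp only [M.apply_eq_sum_basisVec v, M'.apply_eq_sum_basisVec v, h]

lemma ContinuousMultilinearMap.norm_le_sum_basisVec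
    (M : ContinuousMultilinearMap ℝ (fun _ : Fin k => (Fin m → ℝ) × ℝ) V) :
    ‖M‖ ≤ ∑ r : Fin k → Fin (m + 1), ‖M (fun i => basisVec m (r i))‖ := by
  refine M.opNorm_le_bound (by positivity) fun v => ?_
  rw [M.apply_eq_sum_basisVec v, Finset.sum_mul]
  refine (norm_sum_le _ _).trans (Finset.sum_le_sum fun r _ => ?_)
  rw [norm_smul, mul_comm]
  gcongr
  rw [Real.norm_eq_abs, Finset.abs_prod]
  exact Finset.prod_le_prod (fun i _ => abs_nonneg _) fun i _ => abs_coord_le _ _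

end Coordinates

section MultiIndex

variable {m : ℕ}

def multiIndexList (γ : Fin (m + 1) → ℕ) : List (Fin (m + 1)) :=
  (List.ofFn fun i => List.replicate (γ i) i).flatten

lemma count_multiIndexList (γ : Fin (m + 1) → ℕ) (i : Fin (m + 1)) :
    (multiIndexList γ).count i = γ i := by
  rw [multiIndexList, List.count_flatten, List.map_ofFn, List.sum_ofFn]
  simp [List.count_replicate]

lemma multiPD_eq_pdList (γ : Fin (m + 1) → ℕ) (f : (Fin m → ℝ) × ℝ → ℝ) :
    multiPD γ f = pdList ((multiIndexList γ).map (basisVec m)) f := by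
  have key : ∀ ll : List (List ((Fin m → ℝ) × ℝ)),
      (ll.map pdList).foldr (· ∘ ·) id f = pdList ll.flatten f := by
    intro ll
    induction ll with
    | nil => rfl
    | cons l ll ih => simp [ih, pdList_append]
  have hiter : (List.ofFn fun i => (pd (basisVec m i))^[γ i])
      = (List.ofFn fun i => List.replicate (γ i) (basisVec m i)).map pdList := by
    simp [List.map_ofFn, Function.comp_def, iterate_pd]
  rw [multiPD, hiter, key]
  simp [multiIndexList, List.map_flatten, List.map_ofFn, Function.comp_def, List.map_replicate]

lemma iteratedFDeriv_basisVec_eq_multiPD {f : (Fin m → ℝ) × ℝ → ℝ} (hf : ContDiff ℝ ∞ f)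
    {k : ℕ} (r : Fin k → Fin (m + 1)) (x : (Fin m → ℝ) × ℝ) :
    iteratedFDeriv ℝ k f x (fun i => basisVec m (r i))
      = multiPD (fun i => (List.ofFn r).count i) f x := by
  rw [iteratedFDeriv_apply_eq_pdList hf]
  change pdList (List.ofFn (basisVec m ∘ r)) f x = _
  rw [← List.map_ofFn, multiPD_eq_pdList]
  refine congrFun (pdList_perm (List.Perm.map _ ?_) hf) x
  exact List.perm_iff_count.mpr fun i =>
    (count_multiIndexList (fun j => (List.ofFn r).count j) i).symm

lemma multiPD_eq_iteratedFDeriv {f : (Fin m → ℝ) × ℝ → ℝ} (hf : ContDiff ℝ ∞ f)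
    (γ : Fin (m + 1) → ℕ) (x : (Fin m → ℝ) × ℝ) :
    multiPD γ f x
      = iteratedFDeriv ℝ (multiIndexList γ).length f x
          (fun i => basisVec m ((multiIndexList γ).get i)) := by
  rw [iteratedFDeriv_basisVec_eq_multiPD hf (multiIndexList γ).get, List.ofFn_get]
  simp only [count_multiIndexList]

lemma IsSchwartzFn.bounded_iteratedFDeriv {g : (Fin m → ℝ) × ℝ → ℝ} (hg : IsSchwartzFn g)
    (k : ℕ) : ∃ M, ∀ x, ‖iteratedFDeriv ℝ k g x‖ ≤ M := by
  choose M hM using fun γ => hg.2 (fun _ => 0) γ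
  refine ⟨∑ r : Fin k → Fin (m + 1), M fun i => (List.ofFn r).count i, fun x => ?_⟩
  refine (ContinuousMultilinearMap.norm_le_sum_basisVec _).trans
    (Finset.sum_le_sum fun r _ => ?_)
  simpa [iteratedFDeriv_basisVec_eq_multiPD hg.1, mono] using hM _ x

lemma multiPD_sub {f h : (Fin m → ℝ) × ℝ → ℝ} (hf : ContDiff ℝ ∞ f) (hh : ContDiff ℝ ∞ h)
    (β : Fin (m + 1) → ℕ) (x : (Fin m → ℝ) × ℝ) :
    multiPD β (f - h) x = multiPD β f x - multiPD β h x := by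
  have hk : ((multiIndexList β).length : WithTop ℕ∞) ≤ ∞ := mod_cast le_top
  have hfh : ContDiff ℝ ∞ (f - h) := hf.sub hh
  rw [multiPD_eq_iteratedFDeriv hfh,
    iteratedFDeriv_sub_apply (hf.of_le hk).contDiffAt (hh.of_le hk).contDiffAt,
    multiPD_eq_iteratedFDeriv hf, multiPD_eq_iteratedFDeriv hh]
  rfl

end MultiIndex

section CutOff

variable {E V : Type*} [NormedAddCommGroup E] [NormedSpace ℝ E]
  [NormedAddCommGroup V] [NormedSpace ℝ V]

variable (E) in
def upperHalfSpace : Set (E × ℝ) := {x | 0 < x.2}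

def FlatOnHyperplane (F : E × ℝ → V) : Prop :=
  ∀ (k : ℕ) (x : E × ℝ), x.2 = 0 → iteratedFDeriv ℝ k F x = 0

lemma FlatOnHyperplane.fderiv_iteratedFDeriv_eq_zero {F : E × ℝ → V} (hF : FlatOnHyperplane F)
    (k : ℕ) {x : E × ℝ} (hx : x.2 = 0) : fderiv ℝ (iteratedFDeriv ℝ k F) x = 0 := by
  rw [← ContinuousLinearMap.opNorm_zero_iff, norm_fderiv_iteratedFDeriv, hF _ x hx, norm_zero]

/-- At a boundary point the cut-off function is squeezed between `0` and `G`, which vanishes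
to first order there. -/
lemma hasFDerivAt_indicator_upperHalfSpace {G : E × ℝ → V} (hd : Differentiable ℝ G)
    (h0 : ∀ x : E × ℝ, x.2 = 0 → G x = 0) (h1 : ∀ x : E × ℝ, x.2 = 0 → fderiv ℝ G x = 0)
    (x : E × ℝ) :
    HasFDerivAt ((upperHalfSpace E).indicator G)
      ((upperHalfSpace E).indicator (fderiv ℝ G) x) x := by
  rcases lt_trichotomy x.2 0 with hx | hx | hx
  · have hnot : ∀ y : E × ℝ, y.2 < 0 → y ∉ upperHalfSpace E := fun y hy (h : 0 < y.2) => by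
      linarith
    rw [Set.indicator_of_notMem (hnot x hx)]
    exact (hasFDerivAt_const 0 x).congr_of_eventuallyEq
      (((continuous_snd.tendsto x).eventually (gt_mem_nhds hx)).mono fun y hy =>
        Set.indicator_of_notMem (hnot y hy) G)
  · have hxU : x ∉ upperHalfSpace E := by simp [upperHalfSpace, hx]
    rw [Set.indicator_of_notMem hxU]
    have hlo := (hd x).hasFDerivAt
    rw [hasFDerivAt_iff_isLittleO_nhds_zero] at hlo ⊢
    rw [h1 x hx] at hlo
    refine (Asymptotics.isBigO_of_le _ fun y => ?_).trans_isLittleO hlo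
    by_cases hy : x + y ∈ upperHalfSpace E
    · simp [Set.indicator_of_mem hy, Set.indicator_of_notMem hxU, h0 x hx]
    · simp [Set.indicator_of_notMem hy, Set.indicator_of_notMem hxU]
  · rw [Set.indicator_of_mem (show x ∈ upperHalfSpace E from hx)]
    exact (hd x).hasFDerivAt.congr_of_eventuallyEq
      (((continuous_snd.tendsto x).eventually (lt_mem_nhds hx)).mono fun y hy =>
        Set.indicator_of_mem (show y ∈ upperHalfSpace E from hy) G)

lemma FlatOnHyperplane.iteratedFDeriv_indicator {F : E × ℝ → V} (hF : FlatOnHyperplane F)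
    (hs : ContDiff ℝ ∞ F) (k : ℕ) :
    iteratedFDeriv ℝ k ((upperHalfSpace E).indicator F)
      = (upperHalfSpace E).indicator (iteratedFDeriv ℝ k F) := by
  induction k with
  | zero =>
    rw [iteratedFDeriv_zero_eq_comp, iteratedFDeriv_zero_eq_comp,
      Set.indicator_comp_of_zero (map_zero _)]
  | succ k ih =>
    have hdk : Differentiable ℝ (iteratedFDeriv ℝ k F) :=
      hs.differentiable_iteratedFDeriv (mod_cast ENat.natCast_lt_top k)
    have hfd : fderiv ℝ ((upperHalfSpace E).indicator (iteratedFDeriv ℝ k F))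
        = (upperHalfSpace E).indicator (fderiv ℝ (iteratedFDeriv ℝ k F)) :=
      funext fun x => (hasFDerivAt_indicator_upperHalfSpace hdk (fun y hy => hF k y hy)
        (fun y hy => hF.fderiv_iteratedFDeriv_eq_zero k hy) x).fderiv
    rw [iteratedFDeriv_succ_eq_comp_left, iteratedFDeriv_succ_eq_comp_left, ih, hfd,
      Set.indicator_comp_of_zero (LinearIsometryEquiv.map_zero _)]

lemma FlatOnHyperplane.contDiff_indicator {F : E × ℝ → V} (hF : FlatOnHyperplane F)
    (hs : ContDiff ℝ ∞ F) : ContDiff ℝ ∞ ((upperHalfSpace E).indicator F) :=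
  contDiff_of_differentiable_iteratedFDeriv fun k _ => by
    rw [hF.iteratedFDeriv_indicator hs k]
    exact fun x => (hasFDerivAt_indicator_upperHalfSpace
      (hs.differentiable_iteratedFDeriv (mod_cast ENat.natCast_lt_top k)) (fun y hy => hF k y hy)
      (fun y hy => hF.fderiv_iteratedFDeriv_eq_zero k hy) x).differentiableAt

end CutOff

section PullbackSum

variable {ι E F : Type*} [NormedAddCommGroup E] [NormedSpace ℝ E]
  [NormedAddCommGroup F] [NormedSpace ℝ F]

noncomputable def pullbackSum (c : ι → ℝ) (L : ι → E →L[ℝ] E) (g : E → F) : E → F :=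
  fun x => ∑' j, c j • g (L j x)

lemma iteratedFDeriv_smul_comp_clm {g : E → F} (hg : ContDiff ℝ ∞ g) (c : ℝ) (L : E →L[ℝ] E)
    (k : ℕ) (x : E) :
    iteratedFDeriv ℝ k (fun y => c • g (L y)) x
      = c • (iteratedFDeriv ℝ k g (L x)).compContinuousLinearMap fun _ => L := by
  have hk : (k : WithTop ℕ∞) ≤ ∞ := mod_cast le_top
  change iteratedFDeriv ℝ k (c • (g ∘ L)) x = _
  rw [iteratedFDeriv_const_smul_apply ((hg.comp L.contDiff).of_le hk).contDiffAt]
  exact congrArg _ (L.iteratedFDeriv_comp_right hg x hk)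

lemma norm_iteratedFDeriv_smul_comp_clm_le {g : E → F} (hg : ContDiff ℝ ∞ g) (c : ℝ)
    (L : E →L[ℝ] E) {k : ℕ} {M : ℝ} (hM : ∀ x, ‖iteratedFDeriv ℝ k g x‖ ≤ M) (x : E) :
    ‖iteratedFDeriv ℝ k (fun y => c • g (L y)) x‖ ≤ |c| * ‖L‖ ^ k * M := by
  rw [iteratedFDeriv_smul_comp_clm hg, norm_smul, Real.norm_eq_abs, mul_assoc]
  gcongr
  refine (ContinuousMultilinearMap.norm_compContinuousLinearMap_le _ _).trans ?_
  rw [Finset.prod_const, Finset.card_univ, Fintype.card_fin, mul_comm]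
  gcongr
  exact hM _

variable [CompleteSpace F] {c : ι → ℝ} {L : ι → E →L[ℝ] E} {g : E → F} {M : ℕ → ℝ}

lemma contDiff_pullbackSum (hg : ContDiff ℝ ∞ g)
    (hM : ∀ k x, ‖iteratedFDeriv ℝ k g x‖ ≤ M k)
    (hcL : ∀ k : ℕ, Summable fun j => |c j| * ‖L j‖ ^ k) :
    ContDiff ℝ ∞ (pullbackSum c L g) :=
  contDiff_tsum (fun j => (hg.comp (L j).contDiff).const_smul (c j))
    (fun k _ => (hcL k).mul_right (M k))
    (fun k j x _ => norm_iteratedFDeriv_smul_comp_clm_le hg (c j) (L j) (hM k) x)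

lemma iteratedFDeriv_pullbackSum_apply (hg : ContDiff ℝ ∞ g)
    (hM : ∀ k x, ‖iteratedFDeriv ℝ k g x‖ ≤ M k)
    (hcL : ∀ k : ℕ, Summable fun j => |c j| * ‖L j‖ ^ k) (k : ℕ) (x : E) (v : Fin k → E) :
    iteratedFDeriv ℝ k (pullbackSum c L g) x v
      = ∑' j, c j • iteratedFDeriv ℝ k g (L j x) (fun i => L j (v i)) := by
  have hf : ∀ j, ContDiff ℝ (⊤ : ℕ∞) (fun y => c j • g (L j y)) :=
    fun j => (hg.comp (L j).contDiff).const_smul (c j)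
  have hbound := fun (k : ℕ) j x (_ : (k : ℕ∞) ≤ ⊤) =>
    norm_iteratedFDeriv_smul_comp_clm_le hg (c j) (L j) (hM k) x
  have hsum : Summable fun j => iteratedFDeriv ℝ k (fun y => c j • g (L j y)) x :=
    ((hcL k).mul_right (M k)).of_norm_bounded fun j => hbound k j x le_top
  unfold pullbackSum
  rw [iteratedFDeriv_tsum hf (fun k _ => (hcL k).mul_right (M k)) hbound le_top]
  refine ((ContinuousMultilinearMap.apply ℝ (fun _ : Fin k => E) F v).map_tsum hsum).trans ?_
  simp [iteratedFDeriv_smul_comp_clm hg]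

end PullbackSum

section ScaleLast

variable {E : Type*} [NormedAddCommGroup E] [NormedSpace ℝ E] {m : ℕ}

noncomputable def scaleLast (t : ℝ) : E × ℝ →L[ℝ] E × ℝ :=
  (ContinuousLinearMap.fst ℝ E ℝ).prod (t • ContinuousLinearMap.snd ℝ E ℝ)

@[simp] lemma scaleLast_apply (t : ℝ) (x : E × ℝ) : scaleLast t x = (x.1, t * x.2) := rfl

lemma norm_scaleLast_le (t : ℝ) : ‖(scaleLast t : E × ℝ →L[ℝ] E × ℝ)‖ ≤ max 1 |t| := by
  refine ContinuousLinearMap.opNorm_le_bound _ (by positivity) fun x => ?_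
  rw [scaleLast_apply, Prod.norm_def, Real.norm_eq_abs, abs_mul]
  refine max_le ((norm_fst_le x).trans (le_mul_of_one_le_left (norm_nonneg _) (le_max_left _ _)))
    (mul_le_mul (le_max_right _ _) (norm_snd_le x) (abs_nonneg _) (by positivity))

lemma scaleLast_basisVec (t : ℝ) (i : Fin (m + 1)) :
    scaleLast t (basisVec m i) = (if i = Fin.last m then t else 1) • basisVec m i := by
  by_cases h : (i : ℕ) < m
  · simp [basisVec, h, Fin.ext_iff, h.ne]
  · have hi : i = Fin.last m := Fin.ext (by simp; omega)
    simp [basisVec, hi]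

lemma ContinuousMultilinearMap.apply_scaleLast_basisVec {V : Type*} [NormedAddCommGroup V]
    [NormedSpace ℝ V] {k : ℕ} (M : ContinuousMultilinearMap ℝ (fun _ : Fin k => (Fin m → ℝ) × ℝ) V)
    (t : ℝ) (r : Fin k → Fin (m + 1)) :
    M (fun i => scaleLast t (basisVec m (r i)))
      = t ^ (List.ofFn r).count (Fin.last m) • M (fun i => basisVec m (r i)) := by
  simp only [scaleLast_basisVec, M.map_smul_univ]
  congr 1
  rw [← List.prod_ofFn, ← Function.comp_def (fun i => if i = Fin.last m then t else 1) r,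
    ← List.map_ofFn, List.prod_map_eq_pow_single (Fin.last m) _ fun i hi _ => if_neg hi,
    if_pos rfl]

lemma mono_scaleLast (α : Fin (m + 1) → ℕ) (t : ℝ) (x : (Fin m → ℝ) × ℝ) :
    mono α (scaleLast t x) = t ^ α (Fin.last m) * mono α x := by
  simp only [mono, scaleLast_apply, mul_pow]
  ring

end ScaleLast

section ReflectedSum

variable {m : ℕ} {ι : Type*} {c t : ι → ℝ} {g : (Fin m → ℝ) × ℝ → ℝ}

lemma FlatOnHyperplane.multiPD_indicator {F : (Fin m → ℝ) × ℝ → ℝ} (hF : FlatOnHyperplane F)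
    (hs : ContDiff ℝ ∞ F) (β : Fin (m + 1) → ℕ) :
    multiPD β ((upperHalfSpace _).indicator F) = (upperHalfSpace _).indicator (multiPD β F) := by
  funext x
  rw [multiPD_eq_iteratedFDeriv (hF.contDiff_indicator hs), hF.iteratedFDeriv_indicator hs]
  by_cases hx : x ∈ upperHalfSpace (Fin m → ℝ)
  · simp [Set.indicator_of_mem hx, multiPD_eq_iteratedFDeriv hs]
  · simp [Set.indicator_of_notMem hx]

lemma summable_abs_mul_norm_scaleLast_pow (hct : ∀ k : ℕ, Summable fun j => |c j| * max 1 |t j| ^ k)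
    (k : ℕ) : Summable fun j => |c j| * ‖(scaleLast (t j) : (Fin m → ℝ) × ℝ →L[ℝ] _)‖ ^ k :=
  (hct k).of_nonneg_of_le (fun j => by positivity)
    fun j => by gcongr; exact norm_scaleLast_le _

lemma IsSchwartzFn.contDiff_pullbackSum_scaleLast (hg : IsSchwartzFn g)
    (hct : ∀ k : ℕ, Summable fun j => |c j| * max 1 |t j| ^ k) :
    ContDiff ℝ ∞ (pullbackSum c (fun j => scaleLast (t j)) g) := by
  choose M hM using hg.bounded_iteratedFDeriv
  exact contDiff_pullbackSum hg.1 hM (summable_abs_mul_norm_scaleLast_pow hct)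

lemma IsSchwartzFn.iteratedFDeriv_pullbackSum_basisVec (hg : IsSchwartzFn g)
    (hct : ∀ k : ℕ, Summable fun j => |c j| * max 1 |t j| ^ k) {k : ℕ}
    (r : Fin k → Fin (m + 1)) (x : (Fin m → ℝ) × ℝ) :
    iteratedFDeriv ℝ k (pullbackSum c (fun j => scaleLast (t j)) g) x (fun i => basisVec m (r i))
      = ∑' j, c j * t j ^ (List.ofFn r).count (Fin.last m)
          * iteratedFDeriv ℝ k g (scaleLast (t j) x) (fun i => basisVec m (r i)) := by
  choose M hM using hg.bounded_iteratedFDeriv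
  rw [iteratedFDeriv_pullbackSum_apply hg.1 hM (summable_abs_mul_norm_scaleLast_pow hct)]
  simp only [ContinuousMultilinearMap.apply_scaleLast_basisVec, smul_eq_mul, mul_assoc]

lemma IsSchwartzFn.multiPD_pullbackSum (hg : IsSchwartzFn g)
    (hct : ∀ k : ℕ, Summable fun j => |c j| * max 1 |t j| ^ k) (β : Fin (m + 1) → ℕ)
    (x : (Fin m → ℝ) × ℝ) :
    multiPD β (pullbackSum c (fun j => scaleLast (t j)) g) x
      = ∑' j, c j * t j ^ β (Fin.last m) * multiPD β g (scaleLast (t j) x) := by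
  rw [multiPD_eq_iteratedFDeriv (hg.contDiff_pullbackSum_scaleLast hct),
    hg.iteratedFDeriv_pullbackSum_basisVec hct, List.ofFn_get, count_multiIndexList]
  simp only [← multiPD_eq_iteratedFDeriv hg.1]

lemma IsSchwartzFn.flatOnHyperplane_sub_pullbackSum (hg : IsSchwartzFn g)
    (hct : ∀ k : ℕ, Summable fun j => |c j| * max 1 |t j| ^ k)
    (hmom : ∀ p : ℕ, HasSum (fun j => c j * t j ^ p) 1) :
    FlatOnHyperplane (g - pullbackSum c (fun j => scaleLast (t j)) g) := by
  intro k x hx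
  have hk : (k : WithTop ℕ∞) ≤ ∞ := mod_cast le_top
  rw [iteratedFDeriv_sub_apply (hg.1.of_le hk).contDiffAt
    ((hg.contDiff_pullbackSum_scaleLast hct).of_le hk).contDiffAt, sub_eq_zero]
  refine ContinuousMultilinearMap.ext_basisVec fun r => ?_
  have hfix : ∀ j, scaleLast (t j) x = x := fun j => by simp [hx, Prod.ext_iff]
  rw [hg.iteratedFDeriv_pullbackSum_basisVec hct, tsum_congr fun j => by rw [hfix j],
    tsum_mul_right, (hmom _).tsum_eq, one_mul]

lemma IsSchwartzFn.abs_mono_mul_multiPD_pullbackSum_le (hg : IsSchwartzFn g)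
    (hct : ∀ k : ℕ, Summable fun j => |c j| * max 1 |t j| ^ k) (ht : ∀ j, t j ≠ 0)
    {α β : Fin (m + 1) → ℕ}
    (hw : Summable fun j => |c j| * |t j| ^ β (Fin.last m) * |t j|⁻¹ ^ α (Fin.last m))
    {S : ℝ} (hS : ∀ y, |mono α y * multiPD β g y| ≤ S) (x : (Fin m → ℝ) × ℝ) :
    |mono α x * multiPD β (pullbackSum c (fun j => scaleLast (t j)) g) x|
      ≤ (∑' j, |c j| * |t j| ^ β (Fin.last m) * |t j|⁻¹ ^ α (Fin.last m)) * S := by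
  rw [hg.multiPD_pullbackSum hct, ← tsum_mul_left, ← Real.norm_eq_abs]
  refine tsum_of_norm_bounded (hw.hasSum.mul_right S) fun j => ?_
  have hmono : mono α x = (t j)⁻¹ ^ α (Fin.last m) * mono α (scaleLast (t j) x) := by
    rw [mono_scaleLast, ← mul_assoc, ← mul_pow, inv_mul_cancel₀ (ht j), one_pow, one_mul]
  calc ‖mono α x * (c j * t j ^ β (Fin.last m) * multiPD β g (scaleLast (t j) x))‖
      = |c j| * |t j| ^ β (Fin.last m) * |t j|⁻¹ ^ α (Fin.last m)
          * |mono α (scaleLast (t j) x) * multiPD β g (scaleLast (t j) x)| := by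
        rw [hmono, Real.norm_eq_abs]
        simp only [abs_mul, abs_pow, abs_inv]
        ring
    _ ≤ _ := by gcongr; exact hS _

lemma IsSchwartzFn.abs_mono_mul_multiPD_extension_le (hg : IsSchwartzFn g)
    (hct : ∀ k : ℕ, Summable fun j => |c j| * max 1 |t j| ^ k)
    (hmom : ∀ p : ℕ, HasSum (fun j => c j * t j ^ p) 1) (ht : ∀ j, t j ≠ 0)
    {α β : Fin (m + 1) → ℕ}
    (hw : Summable fun j => |c j| * |t j| ^ β (Fin.last m) * |t j|⁻¹ ^ α (Fin.last m))
    {S : ℝ} (hS : ∀ y, |mono α y * multiPD β g y| ≤ S) (x : (Fin m → ℝ) × ℝ) :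
    |mono α x * multiPD β
        ((upperHalfSpace _).indicator (g - pullbackSum c (fun j => scaleLast (t j)) g)) x|
      ≤ (1 + ∑' j, |c j| * |t j| ^ β (Fin.last m) * |t j|⁻¹ ^ α (Fin.last m)) * S := by
  have hT := hg.contDiff_pullbackSum_scaleLast hct
  rw [(hg.flatOnHyperplane_sub_pullbackSum hct hmom).multiPD_indicator (hg.1.sub hT)]
  by_cases hx : x ∈ upperHalfSpace (Fin m → ℝ)
  · rw [Set.indicator_of_mem hx, multiPD_sub hg.1 hT, mul_sub, add_mul, one_mul]
    exact (abs_sub _ _).trans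
      (add_le_add (hS x) (hg.abs_mono_mul_multiPD_pullbackSum_le hct ht hw hS x))
  · have hS0 : 0 ≤ S := (abs_nonneg _).trans (hS 0)
    have hW0 : 0 ≤ ∑' j, |c j| * |t j| ^ β (Fin.last m) * |t j|⁻¹ ^ α (Fin.last m) :=
      tsum_nonneg fun j => by positivity
    rw [Set.indicator_of_notMem hx, mul_zero, abs_zero]
    positivity

end ReflectedSum

section AdjointExtension

variable {m : ℕ} {a b : ℤ → ℝ}

lemma Eadj_eq_indicator (a b : ℤ → ℝ) (g : (Fin m → ℝ) × ℝ → ℝ) :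
    Eadj a b g = (upperHalfSpace _).indicator
      (g - pullbackSum (fun j => a j / -b j) (fun j => scaleLast (-(b j)⁻¹)) g) := by
  funext x
  by_cases hx : x ∈ upperHalfSpace (Fin m → ℝ)
  · have hx' : 0 < x.2 := hx
    simp only [Eadj, if_pos hx', Set.indicator_of_mem hx, pullbackSum, Pi.sub_apply,
      scaleLast_apply, smul_eq_mul, neg_mul, mul_neg, div_eq_inv_mul]
  · have hx' : ¬ 0 < x.2 := hx
    simp only [Eadj, if_neg hx', Set.indicator_of_notMem hx]

lemma summable_extension_coeff (hb : ∀ j, 0 < b j)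
    (hsum : ∀ k : ℤ, Summable fun j => |a j| * b j ^ k) (k : ℕ) :
    Summable fun j => |a j / -b j| * max 1 |-(b j)⁻¹| ^ k := by
  refine ((hsum (-1)).add (hsum (-(k + 1)))).of_nonneg_of_le (fun j => by positivity) fun j => ?_
  have hbj := hb j
  rw [abs_div, abs_neg, abs_neg, abs_inv, abs_of_pos hbj]
  calc |a j| / b j * max 1 (b j)⁻¹ ^ k ≤ |a j| / b j * (1 + (b j)⁻¹ ^ k) := by
        gcongr
        rcases le_total (b j)⁻¹ 1 with h | h
        · rw [max_eq_left h, one_pow]; linarith [pow_nonneg (inv_nonneg.2 hbj.le) k]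
        · rw [max_eq_right h]; linarith
    _ = |a j| * b j ^ (-1 : ℤ) + |a j| * b j ^ (-((k : ℤ) + 1)) := by
        rw [zpow_neg, zpow_neg, zpow_one, zpow_add_one₀ hbj.ne', zpow_natCast, inv_pow]
        field_simp

lemma abs_extension_weight {a b : ℝ} (hb : 0 < b) (p q : ℕ) :
    |a / -b| * |-b⁻¹| ^ p * |-b⁻¹|⁻¹ ^ q = |a| * b ^ ((q : ℤ) - p - 1) := by
  rw [abs_div, abs_neg, abs_neg, abs_inv, abs_of_pos hb, inv_inv, sub_sub,
    zpow_sub₀ hb.ne', zpow_natCast, zpow_add_one₀ hb.ne', zpow_natCast, inv_pow]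
  field_simp

lemma hasSum_extension_moment
    (hmom : ∀ k : ℕ, 1 ≤ k → HasSum (fun j : ℤ => a j * (-(b j)) ^ (-(k : ℤ))) 1) (p : ℕ) :
    HasSum (fun j => a j / -b j * (-(b j)⁻¹) ^ p) 1 := by
  refine (hmom (p + 1) (Nat.le_add_left 1 p)).congr_fun fun j => ?_
  rw [zpow_neg, zpow_natCast, pow_succ', mul_inv, ← inv_pow, neg_inv, div_eq_mul_inv]
  ring

lemma IsSchwartzFn.contDiff_Eadj (hb : ∀ j, 0 < b j)
    (hsum : ∀ k : ℤ, Summable fun j => |a j| * b j ^ k)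
    (hmom : ∀ k : ℕ, 1 ≤ k → HasSum (fun j : ℤ => a j * (-(b j)) ^ (-(k : ℤ))) 1)
    {g : (Fin m → ℝ) × ℝ → ℝ} (hg : IsSchwartzFn g) : ContDiff ℝ ∞ (Eadj a b g) := by
  have hct := summable_extension_coeff hb hsum
  rw [Eadj_eq_indicator]
  exact (hg.flatOnHyperplane_sub_pullbackSum hct (hasSum_extension_moment hmom)).contDiff_indicator
    (hg.1.sub (hg.contDiff_pullbackSum_scaleLast hct))

lemma IsSchwartzFn.abs_mono_mul_multiPD_Eadj_le (hb : ∀ j, 0 < b j)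
    (hsum : ∀ k : ℤ, Summable fun j => |a j| * b j ^ k)
    (hmom : ∀ k : ℕ, 1 ≤ k → HasSum (fun j : ℤ => a j * (-(b j)) ^ (-(k : ℤ))) 1)
    {g : (Fin m → ℝ) × ℝ → ℝ} (hg : IsSchwartzFn g) {α β : Fin (m + 1) → ℕ} {S : ℝ}
    (hS : ∀ y, |mono α y * multiPD β g y| ≤ S) (x : (Fin m → ℝ) × ℝ) :
    |mono α x * multiPD β (Eadj a b g) x|
      ≤ (1 + ∑' j, |a j| * b j ^ ((α (Fin.last m) : ℤ) - β (Fin.last m) - 1)) * S := by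
  have hw := funext fun j =>
    abs_extension_weight (a := a j) (hb j) (β (Fin.last m)) (α (Fin.last m))
  rw [Eadj_eq_indicator, ← hw]
  exact hg.abs_mono_mul_multiPD_extension_le (summable_extension_coeff hb hsum)
    (hasSum_extension_moment hmom) (fun j => neg_ne_zero.2 (inv_ne_zero (hb j).ne'))
    (hw ▸ hsum _) hS x

end AdjointExtension

/-- if ∑_j |a_j| b_j^m < ∞ for every m ∈ ℤ and ∑_j a_j(-b_j)^{-k} = 1
for every integer k ≥ 1 (b_j > 0), then for every Schwartz function g, E*g is a
Schwartz function supported in the closed half-space {xₙ ≥ 0}, and for all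
multi-indices α, β there is a constant C, independent of g, with
sup_x |x^α ∂^β(E*g)(x)| ≤ C · sup_y |y^α ∂^β g(y)|. -/
theorem statement18 (m : ℕ) (a b : ℤ → ℝ) (hb : ∀ j, 0 < b j)
    (hsum : ∀ k : ℤ, Summable (fun j : ℤ => |a j| * b j ^ k))
    (hmom : ∀ k : ℕ, 1 ≤ k → HasSum (fun j : ℤ => a j * (-(b j)) ^ (-(k : ℤ))) 1) :
    (∀ g : (Fin m → ℝ) × ℝ → ℝ, IsSchwartzFn g →
      IsSchwartzFn (Eadj a b g) ∧
      ∀ x : (Fin m → ℝ) × ℝ, Eadj a b g x ≠ 0 → 0 ≤ x.2) ∧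
    (∀ α β : Fin (m + 1) → ℕ, ∃ C : ℝ,
      ∀ g : (Fin m → ℝ) × ℝ → ℝ, IsSchwartzFn g →
        ∀ x : (Fin m → ℝ) × ℝ,
          |mono α x * multiPD β (Eadj a b g) x| ≤
            C * ⨆ y : (Fin m → ℝ) × ℝ, |mono α y * multiPD β g y|) := by
  refine ⟨fun g hg => ⟨⟨hg.contDiff_Eadj hb hsum hmom, fun α β => ?_⟩, fun x hx => ?_⟩,
    fun α β => ⟨1 + ∑' j, |a j| * b j ^ ((α (Fin.last m) : ℤ) - β (Fin.last m) - 1),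
      fun g hg x => hg.abs_mono_mul_multiPD_Eadj_le hb hsum hmom (fun y => ?_) x⟩⟩
  · obtain ⟨M, hM⟩ := hg.2 α β
    exact ⟨_, hg.abs_mono_mul_multiPD_Eadj_le hb hsum hmom hM⟩
  · exact (not_not.1 fun h => hx (if_neg h)).le
  · obtain ⟨M, hM⟩ := hg.2 α β
    exact le_ciSup ⟨M, Set.forall_mem_range.2 hM⟩ y
end
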